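/- arXiv:nlin/0103035 — 5 statements merged into one kernel-verified Lean document; each statement's English description precedes it below -/
import Mathlib

section
/- GLM continuity equation (deterministic core). Suppose D : ℝⁿ × ℝ → ℝ is smooth and satisfies the continuity equation ∂ₜD + div(D u) = 0 everywhere. Then the transformed density D̃(x,t) := D(ψ(t,x), t) · det(Dₓψ(t,x)) satisfies the continuity equation with the pulled-back velocity: ∂ₜD̃ + div(D̃ w) = 0 everywhere. -/
open scoped BigOperators

noncomputable section

/-- Spatial Jacobian matrix of a map `f : ℝⁿ → ℝⁿ` at `x`:
`(jacobian f x) i j = ∂fⁱ/∂xʲ (x)`. -/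
def jacobian {n : ℕ} (f : (Fin n → ℝ) → (Fin n → ℝ)) (x : Fin n → ℝ) :
    Matrix (Fin n) (Fin n) ℝ :=
  fun i j => fderiv ℝ (fun y => f y i) x (Pi.single j 1)

/-!
Write `D̃ = (D ∘ ψ) · J` with `J = det A`, `A = Dₓψ`. The velocity relation says that `Dψ` maps
the space-time direction `(w, 1)` to `(u ∘ ψ, 1)`, so the material derivative `∂ₜ + w · ∇` of
`D ∘ ψ` is `(∂ₜ + u · ∇) D ∘ ψ`. By Jacobi's formula the material derivative of `J` is
`tr (adj A · Ȧ)`, where `Ȧ` is the derivative of `A` along `(w, 1)`; differentiating the velocity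
relation in space and using the symmetry of second derivatives gives `Ȧ = (Du ∘ ψ) A - A Dw`,
so that this equals `J (div u ∘ ψ - div w)`. Adding up,
`∂ₜD̃ + div (D̃ w) = J · (∂ₜD + div (D u)) ∘ ψ = 0`.
-/

open ContinuousLinearMap

namespace Matrix

variable {ι : Type*} [Fintype ι] [DecidableEq ι]

def detRowContinuousMultilinear {𝕜 : Type*} [NontriviallyNormedField 𝕜] :
    ContinuousMultilinearMap 𝕜 (fun _ : ι => ι → 𝕜) 𝕜 :=
  { (detRowAlternating : (ι → 𝕜) [⋀^ι]→ₗ[𝕜] 𝕜).toMultilinearMap with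
    cont := (continuous_id.matrix_det : Continuous fun M : Matrix ι ι 𝕜 => M.det) }

variable {R : Type*} [CommRing R]

theorem det_updateRow_eq_sum_mul_adjugate (A : Matrix ι ι R) (i : ι) (b : ι → R) :
    (A.updateRow i b).det = ∑ j, b j * A.adjugate j i := by
  rw [det_eq_sum_mul_adjugate_row _ i]
  refine Finset.sum_congr rfl fun j _ => ?_
  rw [updateRow_self, adjugate_apply, adjugate_apply, updateRow_idem]

theorem trace_adjugate_mul_mul_sub_mul (A B C : Matrix ι ι R) :
    (A.adjugate * (B * A - A * C)).trace = A.det * (B.trace - C.trace) := by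
  rw [Matrix.mul_sub, trace_sub, ← Matrix.mul_assoc, trace_mul_comm, ← Matrix.mul_assoc,
    mul_adjugate, ← Matrix.mul_assoc, adjugate_mul, Matrix.smul_mul, Matrix.smul_mul,
    Matrix.one_mul, Matrix.one_mul, trace_smul, trace_smul, smul_eq_mul, smul_eq_mul, mul_sub]

end Matrix

section Calculus

variable {𝕜 E F G H : Type*} [NontriviallyNormedField 𝕜]
  [NormedAddCommGroup E] [NormedSpace 𝕜 E] [NormedAddCommGroup F] [NormedSpace 𝕜 F]
  [NormedAddCommGroup G] [NormedSpace 𝕜 G] [NormedAddCommGroup H] [NormedSpace 𝕜 H]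

/-- Jacobi's formula, in adjugate form so that `M x` need not be invertible. -/
theorem HasFDerivAt.matrix_det {ι : Type*} [Fintype ι] [DecidableEq ι] {M : E → Matrix ι ι 𝕜}
    {M' : Matrix ι ι (E →L[𝕜] 𝕜)} {x : E} (h : ∀ i j, HasFDerivAt (fun y => M y i j) (M' i j) x) :
    HasFDerivAt (fun y => (M y).det) (∑ i, ∑ j, (M x).adjugate i j • M' j i) x := by
  have hrows := HasFDerivAt.multilinear_comp Matrix.detRowContinuousMultilinear
    (g := fun i y => M y i) fun i => hasFDerivAt_pi.2 (h i)
  refine hrows.congr_fderiv (ContinuousLinearMap.ext fun v => ?_)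
  calc _ = ∑ i, ((M x).updateRow i fun k => M' i k v).det := by simp; rfl
    _ = _ := by
      simp only [Matrix.det_updateRow_eq_sum_mul_adjugate, _root_.sum_apply, _root_.smul_apply,
        smul_eq_mul]
      rw [Finset.sum_comm]
      simp only [mul_comm]

theorem HasFDerivAt.comp_prodMk_left {f : E × F → G} {f' : E × F →L[𝕜] G} {y : E} {s : F}
    (hf : HasFDerivAt f f' (y, s)) : HasFDerivAt (fun z => f (z, s)) (f'.comp (inl 𝕜 E F)) y :=
  hf.comp y (hasFDerivAt_prodMk_left y s)

theorem DifferentiableAt.comp_prodMk_left {f : E × F → G} {y : E} {s : F}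
    (hf : DifferentiableAt 𝕜 f (y, s)) : DifferentiableAt 𝕜 (fun z => f (z, s)) y :=
  hf.hasFDerivAt.comp_prodMk_left.differentiableAt

theorem fderiv_comp_prodMk_snd_apply {Ψ : E × F → G} {f : G × F → H} {p : E × F}
    (hf : DifferentiableAt 𝕜 f (Ψ p, p.2)) (hΨ : DifferentiableAt 𝕜 Ψ p) (q : E × F) :
    fderiv 𝕜 (fun p => f (Ψ p, p.2)) p q = fderiv 𝕜 f (Ψ p, p.2) (fderiv 𝕜 Ψ p q, q.2) := by
  have h : HasFDerivAt (fun p => f (Ψ p, p.2)) _ p :=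
    hf.hasFDerivAt.comp p (hΨ.hasFDerivAt.prodMk hasFDerivAt_snd)
  rw [h.fderiv]
  simp

end Calculus

variable {n : ℕ}

theorem jacobian_eq_toMatrix' {f : (Fin n → ℝ) → Fin n → ℝ} {x : Fin n → ℝ}
    (hf : DifferentiableAt ℝ f x) :
    jacobian f x = LinearMap.toMatrix' (fderiv ℝ f x : (Fin n → ℝ) →ₗ[ℝ] Fin n → ℝ) := by
  ext i j
  simp [jacobian, LinearMap.toMatrix'_apply, fderiv_apply hf]

def continuityResidual (ρ : (Fin n → ℝ) → ℝ → ℝ) (v : (Fin n → ℝ) → ℝ → Fin n → ℝ)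
    (x : Fin n → ℝ) (t : ℝ) : ℝ :=
  deriv (fun s => ρ x s) t + ∑ i, fderiv ℝ (fun y => ρ y t * v y t i) x (Pi.single i 1)

theorem continuityResidual_eq_fderiv_add_mul_trace {ρ : (Fin n → ℝ) → ℝ → ℝ}
    {v : (Fin n → ℝ) → ℝ → Fin n → ℝ} {x : Fin n → ℝ} {t : ℝ}
    (hρ : DifferentiableAt ℝ (fun p : (Fin n → ℝ) × ℝ => ρ p.1 p.2) (x, t))
    (hv : DifferentiableAt ℝ (fun y => v y t) x) :
    continuityResidual ρ v x t =
      fderiv ℝ (fun p : (Fin n → ℝ) × ℝ => ρ p.1 p.2) (x, t) (v x t, 1)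
        + ρ x t * (jacobian (fun y => v y t) x).trace := by
  set ρ' := fderiv ℝ (fun p : (Fin n → ℝ) × ℝ => ρ p.1 p.2) (x, t)
  have htime : HasDerivAt (fun s => ρ x s) (ρ' (0, 1)) t :=
    hρ.hasFDerivAt.comp_hasDerivAt t ((hasDerivAt_const t x).prodMk (hasDerivAt_id t))
  have hflux : ∀ i, fderiv ℝ (fun y => ρ y t * v y t i) x (Pi.single i 1) =
      ρ x t * fderiv ℝ (fun y => v y t i) x (Pi.single i 1) + v x t i * ρ' (Pi.single i 1, 0) := by
    intro i
    rw [(hρ.hasFDerivAt.comp_prodMk_left.fun_mul (hasFDerivAt_pi'.1 hv.hasFDerivAt i)).fderiv,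
      fderiv_apply hv]
    simp [ρ']
  have hsplit : ((v x t, 1) : (Fin n → ℝ) × ℝ) = ∑ i, v x t i • (Pi.single i 1, 0) + (0, 1) := by
    ext <;> simp [Prod.fst_sum, Prod.snd_sum, Finset.sum_apply, Pi.single_apply]
  rw [continuityResidual, htime.deriv, Finset.sum_congr rfl fun i _ => hflux i, hsplit, map_add,
    map_sum, Finset.sum_add_distrib, Matrix.trace, Finset.mul_sum]
  simp only [map_smul, smul_eq_mul, Matrix.diag, jacobian]
  ring

section Flow

/-! `Ψ (x, t)` stands for `ψ(t, x)`: the space variable comes first, as in `D`, `u` and `w`. -/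

variable {Ψ : (Fin n → ℝ) × ℝ → Fin n → ℝ}

theorem jacobian_slice_eq_toMatrix' {y : Fin n → ℝ} {s : ℝ} (hΨ : DifferentiableAt ℝ Ψ (y, s)) :
    jacobian (fun z => Ψ (z, s)) y =
      LinearMap.toMatrix' ((fderiv ℝ Ψ (y, s)).comp (inl ℝ _ ℝ) : (Fin n → ℝ) →ₗ[ℝ] Fin n → ℝ) := by
  have h := hΨ.hasFDerivAt.comp_prodMk_left
  rw [jacobian_eq_toMatrix' h.differentiableAt, h.fderiv]

theorem velocity_eq_fderiv {u w : (Fin n → ℝ) → ℝ → Fin n → ℝ} {x : Fin n → ℝ} {t : ℝ}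
    (hΨ : DifferentiableAt ℝ Ψ (x, t))
    (hrel : u (Ψ (x, t)) t = (fun i => deriv (fun s => Ψ (x, s) i) t)
      + (jacobian (fun y => Ψ (y, t)) x).mulVec (w x t)) :
    u (Ψ (x, t)) t = fderiv ℝ Ψ (x, t) (w x t, 1) := by
  have htime : HasDerivAt (fun s => Ψ (x, s)) (fderiv ℝ Ψ (x, t) (0, 1)) t :=
    hΨ.hasFDerivAt.comp_hasDerivAt t ((hasDerivAt_const t x).prodMk (hasDerivAt_id t))
  have hpartial : (fun i => deriv (fun s => Ψ (x, s) i) t) = fderiv ℝ Ψ (x, t) (0, 1) :=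
    funext fun i => (hasDerivAt_pi.1 htime i).deriv
  rw [hrel, hpartial, jacobian_slice_eq_toMatrix' hΨ, LinearMap.toMatrix'_mulVec]
  simp [← map_add]

theorem hasFDerivAt_jacobian_slice_apply (hΨ : ContDiff ℝ 2 Ψ) (p : (Fin n → ℝ) × ℝ)
    (i j : Fin n) :
    HasFDerivAt (fun p : (Fin n → ℝ) × ℝ => jacobian (fun y => Ψ (y, p.2)) p.1 i j)
      ((proj i).comp ((apply ℝ (Fin n → ℝ) ((Pi.single j 1 : Fin n → ℝ), (0 : ℝ))).comp
        (fderiv ℝ (fderiv ℝ Ψ) p))) p := by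
  have hentry : (fun p : (Fin n → ℝ) × ℝ => jacobian (fun y => Ψ (y, p.2)) p.1 i j) =
      fun p => fderiv ℝ Ψ p (Pi.single j 1, 0) i := by
    funext p
    rw [jacobian_slice_eq_toMatrix' (hΨ.differentiable (by norm_num) _), LinearMap.toMatrix'_apply]
    rfl
  have hL : HasFDerivAt (fderiv ℝ Ψ) (fderiv ℝ (fderiv ℝ Ψ) p) p :=
    ((hΨ.fderiv_right (m := 1) (by norm_num)).differentiable one_ne_zero p).hasFDerivAt
  rw [hentry]
  exact hasFDerivAt_pi'.1 ((apply ℝ (Fin n → ℝ) _).hasFDerivAt.comp p hL) i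

theorem fderiv_det_jacobian_slice_apply (hΨ : ContDiff ℝ 2 Ψ) (p q : (Fin n → ℝ) × ℝ) :
    fderiv ℝ (fun p : (Fin n → ℝ) × ℝ => (jacobian (fun y => Ψ (y, p.2)) p.1).det) p q =
      ((jacobian (fun y => Ψ (y, p.2)) p.1).adjugate *
        LinearMap.toMatrix' ((fderiv ℝ (fderiv ℝ Ψ) p q).comp (inl ℝ _ ℝ) :
          (Fin n → ℝ) →ₗ[ℝ] Fin n → ℝ)).trace := by
  rw [(HasFDerivAt.matrix_det (hasFDerivAt_jacobian_slice_apply hΨ p)).fderiv]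
  simp [Matrix.trace, Matrix.mul_apply, LinearMap.toMatrix'_apply]

theorem toMatrix'_fderiv_fderiv_eq_jacobian_mul_sub {u w : (Fin n → ℝ) → ℝ → Fin n → ℝ}
    {x : Fin n → ℝ} {t : ℝ} (hΨ : ContDiff ℝ 2 Ψ)
    (hu : DifferentiableAt ℝ (fun y => u y t) (Ψ (x, t)))
    (hw : DifferentiableAt ℝ (fun y => w y t) x)
    (hrel : ∀ y, u (Ψ (y, t)) t = fderiv ℝ Ψ (y, t) (w y t, 1)) :
    LinearMap.toMatrix' ((fderiv ℝ (fderiv ℝ Ψ) (x, t) (w x t, 1)).comp (inl ℝ _ ℝ) :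
        (Fin n → ℝ) →ₗ[ℝ] Fin n → ℝ) =
      jacobian (fun y => u y t) (Ψ (x, t)) * jacobian (fun y => Ψ (y, t)) x
        - jacobian (fun y => Ψ (y, t)) x * jacobian (fun y => w y t) x := by
  have hΨ₁ : Differentiable ℝ Ψ := hΨ.differentiable (by norm_num)
  set B := fderiv ℝ (fderiv ℝ Ψ) (x, t)
  have hL : HasFDerivAt (fderiv ℝ Ψ) B (x, t) :=
    ((hΨ.fderiv_right (m := 1) (by norm_num)).differentiable one_ne_zero _).hasFDerivAt
  have hsymm : ∀ v v', B v v' = B v' v :=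
    hΨ.contDiffAt.isSymmSndFDerivAt (by simp [minSmoothness_of_isRCLikeNormedField])
  have hlhs : HasFDerivAt (fun y => u (Ψ (y, t)) t)
      ((fderiv ℝ (fun y => u y t) (Ψ (x, t))).comp ((fderiv ℝ Ψ (x, t)).comp (inl ℝ _ ℝ))) x :=
    hu.hasFDerivAt.comp (g := fun y => u y t) x (hΨ₁ _).hasFDerivAt.comp_prodMk_left
  have hrhs : HasFDerivAt (fun y => fderiv ℝ Ψ (y, t) (w y t, 1))
      ((fderiv ℝ Ψ (x, t)).comp ((fderiv ℝ (fun y => w y t) x).prod 0)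
        + (B.comp (inl ℝ _ ℝ)).flip (w x t, 1)) x :=
    hL.comp_prodMk_left.clm_apply (hw.hasFDerivAt.prodMk (hasFDerivAt_const 1 x))
  have heq := hlhs.unique ((funext hrel : (fun y => u (Ψ (y, t)) t) = _) ▸ hrhs)
  rw [jacobian_eq_toMatrix' hu, jacobian_slice_eq_toMatrix' (hΨ₁ _), jacobian_eq_toMatrix' hw,
    ← LinearMap.toMatrix'_comp, ← LinearMap.toMatrix'_comp, ← map_sub]
  congr 1
  refine LinearMap.ext fun v => ?_
  have hv := DFunLike.congr_fun heq v
  simp only [ContinuousLinearMap.comp_apply, inl_apply, _root_.add_apply, prod_apply,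
    _root_.zero_apply, flip_apply] at hv
  simp only [toLinearMap_comp, coe_inl, LinearMap.coe_comp, coe_coe, LinearMap.coe_inl,
    Function.comp_apply, LinearMap.sub_apply]
  rw [hsymm, hv, add_sub_cancel_left]

theorem fderiv_det_jacobian_slice_eq_det_mul_trace_sub {u w : (Fin n → ℝ) → ℝ → Fin n → ℝ}
    {x : Fin n → ℝ} {t : ℝ} (hΨ : ContDiff ℝ 2 Ψ)
    (hu : DifferentiableAt ℝ (fun y => u y t) (Ψ (x, t)))
    (hw : DifferentiableAt ℝ (fun y => w y t) x)
    (hrel : ∀ y, u (Ψ (y, t)) t = fderiv ℝ Ψ (y, t) (w y t, 1)) :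
    fderiv ℝ (fun p : (Fin n → ℝ) × ℝ => (jacobian (fun y => Ψ (y, p.2)) p.1).det) (x, t)
        (w x t, 1) =
      (jacobian (fun y => Ψ (y, t)) x).det *
        ((jacobian (fun y => u y t) (Ψ (x, t))).trace - (jacobian (fun y => w y t) x).trace) := by
  rw [fderiv_det_jacobian_slice_apply hΨ, toMatrix'_fderiv_fderiv_eq_jacobian_mul_sub hΨ hu hw hrel,
    Matrix.trace_adjugate_mul_mul_sub_mul]

end Flow

theorem glm_continuity_equation_general
    {n : ℕ}
    (ψ : ℝ → (Fin n → ℝ) → (Fin n → ℝ))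
    (u w : (Fin n → ℝ) → ℝ → (Fin n → ℝ))
    (D : (Fin n → ℝ) → ℝ → ℝ)
    -- smoothness
    (hψ : ContDiff ℝ (⊤ : ℕ∞) (fun p : ℝ × (Fin n → ℝ) => ψ p.1 p.2))
    (hu : ContDiff ℝ (⊤ : ℕ∞) (fun p : (Fin n → ℝ) × ℝ => u p.1 p.2))
    (hw : ContDiff ℝ (⊤ : ℕ∞) (fun p : (Fin n → ℝ) × ℝ => w p.1 p.2))
    (hD : ContDiff ℝ (⊤ : ℕ∞) (fun p : (Fin n → ℝ) × ℝ => D p.1 p.2))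
    -- velocity relation : u(ψ(t,x),t) = ∂ₜψ(t,x) + Dₓψ(t,x)·w(x,t)
    (hrel : ∀ t x, u (ψ t x) t =
      (fun i => deriv (fun s => ψ s x i) t) + (jacobian (ψ t) x).mulVec (w x t))
    -- continuity equation : ∂ₜD + div(D u) = 0
    (hcont : ∀ x t,
      deriv (fun s => D x s) t
        + ∑ i, fderiv ℝ (fun y => D y t * u y t i) x (Pi.single i 1) = 0) :
    -- conclusion : ∂ₜD̃ + div(D̃ w) = 0 for D̃(x,t) = D(ψ(t,x),t)·det(Dₓψ(t,x))
    ∀ x t,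
      deriv (fun s => D (ψ s x) s * (jacobian (ψ s) x).det) t
        + ∑ i, fderiv ℝ
            (fun y => D (ψ t y) t * (jacobian (ψ t) y).det * w y t i) x
            (Pi.single i 1) = 0 := by
  intro x t
  have hΨ : ContDiff ℝ 2 (fun p : (Fin n → ℝ) × ℝ => ψ p.2 p.1) :=
    (hψ.comp (contDiff_snd.prodMk contDiff_fst)).of_le (WithTop.coe_le_coe.2 le_top)
  have hΨ₁ : Differentiable ℝ (fun p : (Fin n → ℝ) × ℝ => ψ p.2 p.1) :=
    hΨ.differentiable (by norm_num)
  have hD₁ : Differentiable ℝ (fun p : (Fin n → ℝ) × ℝ => D p.1 p.2) := hD.differentiable (by simp)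
  have hu₁ : DifferentiableAt ℝ (fun y => u y t) (ψ t x) :=
    (hu.differentiable (by simp) _).comp_prodMk_left
  have hw₁ : DifferentiableAt ℝ (fun y => w y t) x :=
    (hw.differentiable (by simp) _).comp_prodMk_left
  have hrel' : ∀ y,
      u (ψ t y) t = fderiv ℝ (fun p : (Fin n → ℝ) × ℝ => ψ p.2 p.1) (y, t) (w y t, 1) := fun y => velocity_eq_fderiv (hΨ₁ _) (hrel t y)
  have hDψ : DifferentiableAt ℝ (fun p : (Fin n → ℝ) × ℝ => D (ψ p.2 p.1) p.2) (x, t) :=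
    (hD₁ _).comp _ ((hΨ₁ _).prodMk differentiableAt_snd)
  have hJ : DifferentiableAt ℝ (fun p : (Fin n → ℝ) × ℝ => (jacobian (ψ p.2) p.1).det) (x, t) :=
    (HasFDerivAt.matrix_det (hasFDerivAt_jacobian_slice_apply hΨ (x, t))).differentiableAt
  have hcontψ : continuityResidual D u (ψ t x) t = 0 := hcont (ψ t x) t
  rw [continuityResidual_eq_fderiv_add_mul_trace (hD₁ _) hu₁] at hcontψ
  change continuityResidual (fun y s => D (ψ s y) s * (jacobian (ψ s) y).det) w x t = 0
  rw [continuityResidual_eq_fderiv_add_mul_trace (hDψ.mul hJ) hw₁,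
    fderiv_fun_mul hDψ hJ, _root_.add_apply, _root_.smul_apply, _root_.smul_apply, smul_eq_mul,
    smul_eq_mul, fderiv_comp_prodMk_snd_apply (f := fun p => D p.1 p.2) (hD₁ _) (hΨ₁ _),
    ← hrel' x, fderiv_det_jacobian_slice_eq_det_mul_trace_sub hΨ hu₁ hw₁ hrel']
  linear_combination (jacobian (ψ t) x).det * hcontψ

/-- **GLM continuity equation (deterministic core).**
If `D` satisfies the continuity equation `∂ₜD + div(D u) = 0` everywhere, then the
transformed density `D̃(x,t) = D(ψ(t,x),t) · det(Dₓψ(t,x))` satisfies the continuity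
equation with the pulled-back velocity `w`, where `u(ψ(t,x),t) = ∂ₜψ(t,x) + Dₓψ(t,x)·w(x,t)`. -/
theorem glm_continuity_equation
    {n : ℕ}
    (ψ η : ℝ → (Fin n → ℝ) → (Fin n → ℝ))
    (u w : (Fin n → ℝ) → ℝ → (Fin n → ℝ))
    (D : (Fin n → ℝ) → ℝ → ℝ)
    -- smoothness
    (hψ : ContDiff ℝ (⊤ : ℕ∞) (fun p : ℝ × (Fin n → ℝ) => ψ p.1 p.2))
    (hu : ContDiff ℝ (⊤ : ℕ∞) (fun p : (Fin n → ℝ) × ℝ => u p.1 p.2))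
    (hw : ContDiff ℝ (⊤ : ℕ∞) (fun p : (Fin n → ℝ) × ℝ => w p.1 p.2))
    (hD : ContDiff ℝ (⊤ : ℕ∞) (fun p : (Fin n → ℝ) × ℝ => D p.1 p.2))
    -- ψ(t,·) is a diffeomorphism of ℝⁿ for every t, with smooth inverse η(t,·)
    (hη : ContDiff ℝ (⊤ : ℕ∞) (fun p : ℝ × (Fin n → ℝ) => η p.1 p.2))
    (hψη : ∀ t x, ψ t (η t x) = x)
    (hηψ : ∀ t x, η t (ψ t x) = x)
    -- velocity relation : u(ψ(t,x),t) = ∂ₜψ(t,x) + Dₓψ(t,x)·w(x,t)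
    (hrel : ∀ t x, u (ψ t x) t =
      (fun i => deriv (fun s => ψ s x i) t) + (jacobian (ψ t) x).mulVec (w x t))
    -- continuity equation : ∂ₜD + div(D u) = 0
    (hcont : ∀ x t,
      deriv (fun s => D x s) t
        + ∑ i, fderiv ℝ (fun y => D y t * u y t i) x (Pi.single i 1) = 0) :
    -- conclusion : ∂ₜD̃ + div(D̃ w) = 0 for D̃(x,t) = D(ψ(t,x),t)·det(Dₓψ(t,x))
    ∀ x t,
      deriv (fun s => D (ψ s x) s * (jacobian (ψ s) x).det) t
        + ∑ i, fderiv ℝ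
            (fun y => D (ψ t y) t * (jacobian (ψ t) y).det * w y t i) x
            (Pi.single i 1) = 0 :=
  glm_continuity_equation_general ψ u w D hψ hu hw hD hrel hcont
end
end

section
/- Circulation transport lemma (time derivative of a Kelvin circulation integral around a material loop). Let γ₀ : [0,1] → ℝⁿ be a smooth loop with γ₀(0) = γ₀(1), and let v : ℝⁿ × ℝ → ℝⁿ be smooth. Define the circulation I(t) := ∫₀¹ v(φ(t, γ₀(s)), t) · ∂ₛ[φ(t, γ₀(s))] ds. Then for all t: I′(t) = ∫₀¹ [∂ₜv + (u·∇)v + v_j∇u^j](φ(t, γ₀(s)), t) · ∂ₛ[φ(t, γ₀(s))] ds. -/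
/-!
Differentiate under the integral sign: the integrand and its time derivative are jointly
continuous, hence bounded on compacts. Pointwise, with `c(τ, s) = φ(τ, γ₀(s))`, the product rule
gives `(∂ₜv + Dv·u)·∂ₛc + v·∂_τ∂ₛc`, and by symmetry of mixed partials and the flow equation
`∂_τ∂ₛc = ∂ₛ(u(c, τ)) = Du·∂ₛc`. Exchanging the order of summation in `v·(Du·∂ₛc)` turns it into
the term `v_j∇u^j` paired with `∂ₛc`.
-/

noncomputable section

/-- The Euler–Poincaré transport operator
`[∂ₜv + (u·∇)v + v_j ∇u^j]ᵢ` evaluated at `(x,t)`. -/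
def EPop {n : ℕ} (u v : (Fin n → ℝ) → ℝ → (Fin n → ℝ))
    (x : Fin n → ℝ) (t : ℝ) : Fin n → ℝ :=
  fun i =>
    deriv (fun s => v x s i) t
      + fderiv ℝ (fun y => v y t i) x (u x t)
      + ∑ j, v x t j * fderiv ℝ (fun y => u y t j) x (Pi.single i 1)

section PartialDerivatives

variable {E G : Type*} [NormedAddCommGroup E] [NormedSpace ℝ E]
  [NormedAddCommGroup G] [NormedSpace ℝ G]

theorem HasFDerivAt.hasDerivAt_comp_prodMk_left {f : ℝ × E → G} {f' : ℝ × E →L[ℝ] G}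
    {τ : ℝ} {y : E} (hf : HasFDerivAt f f' (τ, y)) :
    HasDerivAt (fun σ => f (σ, y)) (f' (1, 0)) τ :=
  hf.comp_hasDerivAt τ ((hasDerivAt_id τ).prodMk (hasDerivAt_const τ y))

theorem HasFDerivAt.hasDerivAt_comp_prodMk_right {f : E × ℝ → G} {f' : E × ℝ →L[ℝ] G}
    {x : E} {s : ℝ} (hf : HasFDerivAt f f' (x, s)) :
    HasDerivAt (fun r => f (x, r)) (f' (0, 1)) s :=
  hf.comp_hasDerivAt s ((hasDerivAt_const s x).prodMk (hasDerivAt_id s))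

theorem fderiv_comp_prodMk_left {f : E × ℝ → G} {x : E} {t : ℝ}
    (hf : DifferentiableAt ℝ f (x, t)) :
    fderiv ℝ (fun y => f (y, t)) x = (fderiv ℝ f (x, t)).comp (ContinuousLinearMap.inl ℝ E ℝ) :=
  (hf.hasFDerivAt.comp x (hasFDerivAt_prodMk_left x t)).fderiv

theorem deriv_comp_prodMk_right {f : E × ℝ → G} {x : E} {t : ℝ}
    (hf : DifferentiableAt ℝ f (x, t)) :
    deriv (fun s => f (x, s)) t = fderiv ℝ f (x, t) (0, 1) :=
  hf.hasFDerivAt.hasDerivAt_comp_prodMk_right.deriv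

theorem ContDiff.continuous_deriv_snd {f : E × ℝ → G} (hf : ContDiff ℝ 1 f) :
    Continuous fun p : E × ℝ => deriv (fun s => f (p.1, s)) p.2 := by
  have hd := hf.differentiable one_ne_zero
  simp only [fun p : E × ℝ => deriv_comp_prodMk_right (hd (p.1, p.2))]
  exact (hf.continuous_fderiv one_ne_zero).clm_apply continuous_const

theorem ContDiff.continuous_fderiv_fst {f : E × ℝ → G} (hf : ContDiff ℝ 1 f) :
    Continuous fun p : E × ℝ => fderiv ℝ (fun y => f (y, p.2)) p.1 := by
  have hd := hf.differentiable one_ne_zero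
  simp only [fun p : E × ℝ => fderiv_comp_prodMk_left (hd (p.1, p.2))]
  exact (hf.continuous_fderiv one_ne_zero).clm_comp continuous_const

theorem hasDerivAt_comp_prodMk_id {f : E × ℝ → G} (hf : Differentiable ℝ f)
    {c : ℝ → E} {c' : E} {τ : ℝ} (hc : HasDerivAt c c' τ) :
    HasDerivAt (fun σ => f (c σ, σ))
      (deriv (fun s => f (c τ, s)) τ + fderiv ℝ (fun y => f (y, τ)) (c τ) c') τ := by
  refine ((hf (c τ, τ)).hasFDerivAt.comp_hasDerivAt (f := fun σ => (c σ, σ)) τ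
    (hc.prodMk (hasDerivAt_id τ))).congr_deriv ?_
  rw [fderiv_comp_prodMk_left (hf _), deriv_comp_prodMk_right (hf _),
    ContinuousLinearMap.comp_apply, ← map_add]
  simp

theorem ContDiff.hasDerivAt_deriv_snd {f : ℝ × ℝ → G} (hf : ContDiff ℝ 2 f) (τ s : ℝ) :
    HasDerivAt (fun σ => deriv (fun r => f (σ, r)) s)
      (deriv (fun r => deriv (fun σ => f (σ, r)) τ) s) τ := by
  have hd := hf.differentiable two_ne_zero
  have hB : HasFDerivAt (fderiv ℝ f) (fderiv ℝ (fderiv ℝ f) (τ, s)) (τ, s) :=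
    ((hf.fderiv_right (m := 1) le_rfl).differentiable one_ne_zero _).hasFDerivAt
  have hsymm : IsSymmSndFDerivAt ℝ f (τ, s) :=
    hf.contDiffAt.isSymmSndFDerivAt (by simp [minSmoothness_of_isRCLikeNormedField])
  have hτ := hB.hasDerivAt_comp_prodMk_left.clm_apply (hasDerivAt_const τ ((0 : ℝ), (1 : ℝ)))
  have hs := hB.hasDerivAt_comp_prodMk_right.clm_apply (hasDerivAt_const s ((1 : ℝ), (0 : ℝ)))
  simp only [fun σ => deriv_comp_prodMk_right (hd (σ, s)),
    fun r => (hd (τ, r)).hasFDerivAt.hasDerivAt_comp_prodMk_left.deriv, hs.deriv]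
  rw [hsymm]
  simpa using hτ

end PartialDerivatives

theorem hasDerivAt_intervalIntegral_of_continuous {E : Type*} [NormedAddCommGroup E]
    [NormedSpace ℝ E] {F F' : ℝ → ℝ → E} {a b t : ℝ} (hF : ∀ τ, Continuous (F τ))
    (hF' : Continuous fun q : ℝ × ℝ => F' q.1 q.2)
    (hderiv : ∀ τ s, HasDerivAt (fun σ => F σ s) (F' τ s) τ) :
    HasDerivAt (fun τ => ∫ s in a..b, F τ s) (∫ s in a..b, F' t s) t := by
  obtain ⟨C, hC⟩ := ((isCompact_closedBall t 1).prod isCompact_uIcc).exists_bound_of_continuousOn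
    hF'.continuousOn
  refine (intervalIntegral.hasDerivAt_integral_of_dominated_loc_of_deriv_le (bound := fun _ => C)
    (Metric.ball_mem_nhds t one_pos) (.of_forall fun τ => (hF τ).aestronglyMeasurable)
    ((hF t).intervalIntegrable a b)
    (hF'.comp (continuous_const.prodMk continuous_id)).aestronglyMeasurable ?_
    intervalIntegrable_const (.of_forall fun s _ τ _ => hderiv τ s)).2
  exact .of_forall fun s hs τ hτ =>
    hC (τ, s) ⟨Metric.ball_subset_closedBall hτ, Set.uIoc_subset_uIcc hs⟩

section Flow

variable {n : ℕ} {u v : (Fin n → ℝ) → ℝ → (Fin n → ℝ)} {c : ℝ → ℝ → (Fin n → ℝ)}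

theorem sum_EPop_mul (x g : Fin n → ℝ) (t : ℝ) :
    ∑ i, EPop u v x t i * g i =
      ∑ i, ((deriv (fun s => v x s i) t + fderiv ℝ (fun y => v y t i) x (u x t)) * g i
        + v x t i * fderiv ℝ (fun y => u y t i) x g) := by
  have hL : ∀ L : (Fin n → ℝ) →L[ℝ] ℝ, L g = ∑ k, g k * L (Pi.single k 1) := fun L => by
    calc L g = L (∑ k, g k • Pi.single k 1) := by
          congr 1; ext j; simp [Pi.single_apply]
      _ = _ := by simp [map_sum, map_smul]
  simp only [EPop, hL, add_mul, Finset.sum_add_distrib, Finset.sum_mul, Finset.mul_sum]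
  congr 1
  rw [Finset.sum_comm]
  exact Finset.sum_congr rfl fun i _ => Finset.sum_congr rfl fun j _ => by ring

theorem hasDerivAt_tangent_of_flow (hu : ContDiff ℝ 1 fun p : (Fin n → ℝ) × ℝ => u p.1 p.2)
    (hc : ContDiff ℝ 2 fun q : ℝ × ℝ => c q.1 q.2)
    (hflow : ∀ τ r i, deriv (fun σ => c σ r i) τ = u (c τ r) τ i) (τ s : ℝ) (i : Fin n) :
    HasDerivAt (fun σ => deriv (fun r => c σ r i) s)
      (fderiv ℝ (fun y => u y τ i) (c τ s) (fun k => deriv (fun r => c τ r k) s)) τ := by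
  have hmixed := (contDiff_pi.mp hc i).hasDerivAt_deriv_snd τ s
  simp only [hflow] at hmixed
  have htangent : HasDerivAt (fun r => c τ r) (fun k => deriv (fun r => c τ r k) s) s :=
    hasDerivAt_pi.2 fun k => ((contDiff_pi.mp hc k).comp (contDiff_const.prodMk contDiff_id)
      |>.differentiable two_ne_zero s).hasDerivAt
  have hui : Differentiable ℝ fun y => u y τ i :=
    ((contDiff_pi.mp hu i).comp (contDiff_id.prodMk contDiff_const)).differentiable one_ne_zero
  have hchain : deriv (fun r => u (c τ r) τ i) s =
      fderiv ℝ (fun y => u y τ i) (c τ s) (fun k => deriv (fun r => c τ r k) s) :=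
    ((hui _).hasFDerivAt.comp_hasDerivAt s htangent).deriv
  rwa [hchain] at hmixed

theorem hasDerivAt_circulation_integrand
    (hu : ContDiff ℝ 1 fun p : (Fin n → ℝ) × ℝ => u p.1 p.2)
    (hv : ContDiff ℝ 1 fun p : (Fin n → ℝ) × ℝ => v p.1 p.2)
    (hc : ContDiff ℝ 2 fun q : ℝ × ℝ => c q.1 q.2)
    (hflow : ∀ τ r i, deriv (fun σ => c σ r i) τ = u (c τ r) τ i) (τ s : ℝ) :
    HasDerivAt (fun σ => ∑ i, v (c σ s) σ i * deriv (fun r => c σ r i) s)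
      (∑ i, EPop u v (c τ s) τ i * deriv (fun r => c τ r i) s) τ := by
  have hcurve : HasDerivAt (fun σ => c σ s) (fun i => deriv (fun σ => c σ s i) τ) τ :=
    hasDerivAt_pi.2 fun i => ((contDiff_pi.mp hc i).comp (contDiff_id.prodMk contDiff_const)
      |>.differentiable two_ne_zero τ).hasDerivAt
  simp only [hflow] at hcurve
  have hmaterial : ∀ i, HasDerivAt (fun σ => v (c σ s) σ i)
      (deriv (fun t => v (c τ s) t i) τ
        + fderiv ℝ (fun y => v y τ i) (c τ s) (u (c τ s) τ)) τ := fun i =>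
    hasDerivAt_comp_prodMk_id (f := fun p => v p.1 p.2 i)
      ((contDiff_pi.mp hv i).differentiable one_ne_zero) hcurve
  rw [sum_EPop_mul]
  exact HasDerivAt.fun_sum fun i _ =>
    (hmaterial i).mul (hasDerivAt_tangent_of_flow hu hc hflow τ s i)

theorem continuous_EPop (hu : ContDiff ℝ 1 fun p : (Fin n → ℝ) × ℝ => u p.1 p.2)
    (hv : ContDiff ℝ 1 fun p : (Fin n → ℝ) × ℝ => v p.1 p.2) :
    Continuous fun p : (Fin n → ℝ) × ℝ => EPop u v p.1 p.2 := by
  refine continuous_pi fun i => ?_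
  have hv_t := (contDiff_pi.mp hv i).continuous_deriv_snd
  have hv_x := (contDiff_pi.mp hv i).continuous_fderiv_fst
  have hu_x := fun j => (contDiff_pi.mp hu j).continuous_fderiv_fst
  exact (hv_t.add (hv_x.clm_apply hu.continuous)).add (continuous_finsetSum _ fun j _ =>
    ((continuous_apply j).comp hv.continuous).mul ((hu_x j).clm_apply continuous_const))

theorem continuous_sum_mul_deriv {W : (Fin n → ℝ) → ℝ → (Fin n → ℝ)}
    (hW : Continuous fun p : (Fin n → ℝ) × ℝ => W p.1 p.2)
    (hc : ContDiff ℝ 1 fun q : ℝ × ℝ => c q.1 q.2) :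
    Continuous fun q : ℝ × ℝ => ∑ i, W (c q.1 q.2) q.1 i * deriv (fun r => c q.1 r i) q.2 :=
  continuous_finsetSum _ fun i _ =>
    ((continuous_apply i).comp (hW.comp (hc.continuous.prodMk continuous_fst))).mul
      (contDiff_pi.mp hc i).continuous_deriv_snd

end Flow

theorem circulation_transport_lemma_general
    {n : ℕ}
    (u v : (Fin n → ℝ) → ℝ → (Fin n → ℝ))
    (φ : ℝ → (Fin n → ℝ) → (Fin n → ℝ))
    (γ₀ : ℝ → (Fin n → ℝ))
    -- smoothness
    (hu : ContDiff ℝ (⊤ : ℕ∞) (fun p : (Fin n → ℝ) × ℝ => u p.1 p.2))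
    (hv : ContDiff ℝ (⊤ : ℕ∞) (fun p : (Fin n → ℝ) × ℝ => v p.1 p.2))
    (hφ : ContDiff ℝ (⊤ : ℕ∞) (fun p : ℝ × (Fin n → ℝ) => φ p.1 p.2))
    (hγ : ContDiff ℝ (⊤ : ℕ∞) γ₀)
    -- φ is the flow map of u
    (hflow : ∀ t x₀ i, deriv (fun s => φ s x₀ i) t = u (φ t x₀) t i) :
    ∀ t,
      HasDerivAt
        (fun τ => ∫ s in (0:ℝ)..1,
          ∑ i, v (φ τ (γ₀ s)) τ i * deriv (fun r => φ τ (γ₀ r) i) s)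
        (∫ s in (0:ℝ)..1,
          ∑ i, EPop u v (φ t (γ₀ s)) t i * deriv (fun r => φ t (γ₀ r) i) s)
        t := by
  intro t
  have hsmooth : ∀ k : ℕ, ((k : ℕ∞) : WithTop ℕ∞) ≤ ((⊤ : ℕ∞) : WithTop ℕ∞) :=
    fun k => WithTop.coe_le_coe.2 le_top
  have hu₁ := hu.of_le (hsmooth 1)
  have hv₁ := hv.of_le (hsmooth 1)
  have hc : ContDiff ℝ 2 fun q : ℝ × ℝ => φ q.1 (γ₀ q.2) :=
    (hφ.comp (contDiff_fst.prodMk (hγ.comp contDiff_snd))).of_le (hsmooth 2)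
  have hc₁ := hc.of_le one_le_two
  have hv_integrand := continuous_sum_mul_deriv (c := fun τ s => φ τ (γ₀ s)) hv₁.continuous hc₁
  exact hasDerivAt_intervalIntegral_of_continuous
    (fun τ => hv_integrand.comp (continuous_const.prodMk continuous_id))
    (continuous_sum_mul_deriv (c := fun τ s => φ τ (γ₀ s)) (continuous_EPop hu₁ hv₁) hc₁)
    (hasDerivAt_circulation_integrand hu₁ hv₁ hc fun τ r => hflow τ (γ₀ r))

/-- **Circulation transport lemma.**  For a material loop carried by the flow `φ`
of the vector field `u`, the Kelvin circulation integral
`I(t) = ∫₀¹ v(φ(t,γ₀(s)),t) · ∂ₛ[φ(t,γ₀(s))] ds` has time derivative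
`I′(t) = ∫₀¹ [∂ₜv + (u·∇)v + v_j∇u^j](φ(t,γ₀(s)),t) · ∂ₛ[φ(t,γ₀(s))] ds`. -/
theorem circulation_transport_lemma
    {n : ℕ}
    (u v : (Fin n → ℝ) → ℝ → (Fin n → ℝ))
    (φ : ℝ → (Fin n → ℝ) → (Fin n → ℝ))
    (γ₀ : ℝ → (Fin n → ℝ))
    -- smoothness
    (hu : ContDiff ℝ (⊤ : ℕ∞) (fun p : (Fin n → ℝ) × ℝ => u p.1 p.2))
    (hv : ContDiff ℝ (⊤ : ℕ∞) (fun p : (Fin n → ℝ) × ℝ => v p.1 p.2))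
    (hφ : ContDiff ℝ (⊤ : ℕ∞) (fun p : ℝ × (Fin n → ℝ) => φ p.1 p.2))
    (hγ : ContDiff ℝ (⊤ : ℕ∞) γ₀)
    -- γ₀ is a loop
    (hloop : γ₀ 0 = γ₀ 1)
    -- φ is the flow map of u
    (hflow : ∀ t x₀ i, deriv (fun s => φ s x₀ i) t = u (φ t x₀) t i)
    (hinit : ∀ x₀, φ 0 x₀ = x₀) :
    ∀ t,
      HasDerivAt
        (fun τ => ∫ s in (0:ℝ)..1,
          ∑ i, v (φ τ (γ₀ s)) τ i * deriv (fun r => φ τ (γ₀ r) i) s)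
        (∫ s in (0:ℝ)..1,
          ∑ i, EPop u v (φ t (γ₀ s)) t i * deriv (fun r => φ t (γ₀ r) i) s)
        t :=
  circulation_transport_lemma_general u v φ γ₀ hu hv hφ hγ hflow
end
end

section
/- Curl representation of the linearized momentum fluctuation in ℝ³. Let D̄ : ℝ³ × ℝ → ℝ and ū, ξ : ℝ³ × ℝ → ℝ³ be smooth, with D̄ satisfying ∂ₜD̄ + div(D̄ū) = 0. With u′ := ∂ₜξ + (ū·∇)ξ − (ξ·∇)ū and D′ := −div(D̄ξ), the identity D̄u′ + D′ū = ∂ₜ(D̄ξ) − curl(ū × (D̄ξ)) holds everywhere. -/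
open scoped BigOperators

noncomputable section

/-- Curl of a vector field on ℝ³ (cyclic, 0-based indices). -/
def curl3 (v : (Fin 3 → ℝ) → (Fin 3 → ℝ)) (x : Fin 3 → ℝ) : Fin 3 → ℝ :=
  fun i => fderiv ℝ (fun y => v y (i + 2)) x (Pi.single (i + 1) 1)
         - fderiv ℝ (fun y => v y (i + 1)) x (Pi.single (i + 2) 1)

/-- Cross product on ℝ³. -/
def cross (a b : Fin 3 → ℝ) : Fin 3 → ℝ :=
  fun i => a (i + 1) * b (i + 2) - a (i + 2) * b (i + 1)

/-! Put `w = D̄ξ`. The vector identity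
`curl (ū × w) = ū div w − w div ū + (w·∇)ū − (ū·∇)w` together with
`(ū·∇)(D̄ξ) = D̄ (ū·∇)ξ + ξ (ū·∇)D̄` and `∂ₜ(D̄ξ) = ξ ∂ₜD̄ + D̄ ∂ₜξ` shows that the two sides
differ by `ξ (∂ₜD̄ + D̄ div ū + (ū·∇)D̄) = ξ (∂ₜD̄ + div(D̄ū))`, which vanishes by the
continuity equation. -/

section Slices

variable {𝕜 E F G : Type*} [NontriviallyNormedField 𝕜] [NormedAddCommGroup E] [NormedSpace 𝕜 E]
  [NormedAddCommGroup F] [NormedSpace 𝕜 F] [NormedAddCommGroup G] [NormedSpace 𝕜 G]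
  {f : E → F → G}

theorem Differentiable.curry_left (hf : Differentiable 𝕜 fun p : E × F => f p.1 p.2) (y : F) :
    Differentiable 𝕜 fun x => f x y :=
  hf.comp (differentiable_id.prodMk (differentiable_const y))

theorem Differentiable.curry_right (hf : Differentiable 𝕜 fun p : E × F => f p.1 p.2) (x : E) :
    Differentiable 𝕜 (f x) :=
  hf.comp ((differentiable_const x).prodMk differentiable_id)

end Slices

theorem ContinuousLinearMap.apply_eq_sum_smul_single {ι R M : Type*} [Fintype ι] [DecidableEq ι]
    [Semiring R] [TopologicalSpace R] [AddCommMonoid M] [Module R M] [TopologicalSpace M]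
    (L : (ι → R) →L[R] M) (v : ι → R) :
    L v = ∑ i, v i • L (Pi.single i 1) := by
  conv_lhs => rw [pi_eq_sum_univ' v]
  simp only [map_sum, map_smul]

def divergence {ι : Type*} [Fintype ι] [DecidableEq ι] (v : (ι → ℝ) → ι → ℝ) (x : ι → ℝ) : ℝ :=
  ∑ i, fderiv ℝ (fun y => v y i) x (Pi.single i 1)

theorem divergence_smul {ι : Type*} [Fintype ι] [DecidableEq ι] {f : (ι → ℝ) → ℝ}
    {v : (ι → ℝ) → ι → ℝ} {x : ι → ℝ} (hf : DifferentiableAt ℝ f x)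
    (hv : DifferentiableAt ℝ v x) :
    divergence (fun y => f y • v y) x = f x * divergence v x + fderiv ℝ f x (v x) := by
  rw [divergence, divergence, Finset.mul_sum, (fderiv ℝ f x).apply_eq_sum_smul_single,
    ← Finset.sum_add_distrib]
  refine Finset.sum_congr rfl fun i _ => ?_
  simp only [Pi.smul_apply, smul_eq_mul]
  rw [fderiv_fun_mul hf (differentiableAt_pi.1 hv i)]
  simp only [add_apply, smul_apply, smul_eq_mul]

theorem curl3_cross {u w : (Fin 3 → ℝ) → Fin 3 → ℝ} {x : Fin 3 → ℝ}
    (hu : DifferentiableAt ℝ u x) (hw : DifferentiableAt ℝ w x) (i : Fin 3) :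
    curl3 (fun y => cross (u y) (w y)) x i
      = u x i * divergence w x - w x i * divergence u x
        + fderiv ℝ (fun y => u y i) x (w x) - fderiv ℝ (fun y => w y i) x (u x) := by
  have hu' := differentiableAt_pi.1 hu
  have hw' := differentiableAt_pi.1 hw
  simp only [curl3, cross, divergence]
  have hmul : ∀ a b, DifferentiableAt ℝ (fun y => u y a * w y b) x :=
    fun a b => (hu' a).mul (hw' b)
  simp only [fderiv_fun_sub (hmul _ _) (hmul _ _), fderiv_fun_mul (hu' _) (hw' _),
    sub_apply, add_apply, smul_apply, smul_eq_mul]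
  rw [(fderiv ℝ (fun y => u y i) x).apply_eq_sum_smul_single,
    (fderiv ℝ (fun y => w y i) x).apply_eq_sum_smul_single]
  simp only [Fin.sum_univ_three, smul_eq_mul]
  fin_cases i <;>
    simp only [Fin.zero_eta, Fin.mk_one, Fin.reduceFinMk, Fin.isValue, Fin.reduceAdd, zero_add] <;>
    ring

/-- **Curl representation of the linearized momentum fluctuation in ℝ³.**
With `u′ = ∂ₜξ + (ū·∇)ξ − (ξ·∇)ū` and `D′ = −div(D̄ξ)`, and `D̄` satisfying
`∂ₜD̄ + div(D̄ū) = 0`, the identity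
`D̄u′ + D′ū = ∂ₜ(D̄ξ) − curl(ū × (D̄ξ))` holds everywhere. -/
theorem curl_representation_momentum_fluctuation
    (Dbar : (Fin 3 → ℝ) → ℝ → ℝ)
    (ubar ξ : (Fin 3 → ℝ) → ℝ → (Fin 3 → ℝ))
    -- smoothness
    (hD : ContDiff ℝ (⊤ : ℕ∞) (fun p : (Fin 3 → ℝ) × ℝ => Dbar p.1 p.2))
    (hu : ContDiff ℝ (⊤ : ℕ∞) (fun p : (Fin 3 → ℝ) × ℝ => ubar p.1 p.2))
    (hξ : ContDiff ℝ (⊤ : ℕ∞) (fun p : (Fin 3 → ℝ) × ℝ => ξ p.1 p.2))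
    -- mean continuity equation : ∂ₜD̄ + div(D̄ū) = 0
    (hcont : ∀ x t,
      deriv (fun s => Dbar x s) t
        + ∑ i, fderiv ℝ (fun y => Dbar y t * ubar y t i) x (Pi.single i 1) = 0)
    -- u′ := ∂ₜξ + (ū·∇)ξ − (ξ·∇)ū
    (u' : (Fin 3 → ℝ) → ℝ → (Fin 3 → ℝ))
    (hu' : ∀ x t i, u' x t i =
      deriv (fun s => ξ x s i) t
        + fderiv ℝ (fun y => ξ y t i) x (ubar x t)
        - fderiv ℝ (fun y => ubar y t i) x (ξ x t))
    -- D′ := −div(D̄ξ)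
    (D' : (Fin 3 → ℝ) → ℝ → ℝ)
    (hD' : ∀ x t, D' x t =
      -(∑ i, fderiv ℝ (fun y => Dbar y t * ξ y t i) x (Pi.single i 1))) :
    -- conclusion : D̄u′ + D′ū = ∂ₜ(D̄ξ) − curl(ū × (D̄ξ))
    ∀ x t i,
      Dbar x t * u' x t i + D' x t * ubar x t i
        = deriv (fun s => Dbar x s * ξ x s i) t
          - curl3 (fun y => cross (ubar y t) (fun j => Dbar y t * ξ y t j)) x i := by
  intro x t i
  have hD₁ : Differentiable ℝ fun p : (Fin 3 → ℝ) × ℝ => Dbar p.1 p.2 :=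
    hD.differentiable (by simp)
  have hu₁ : Differentiable ℝ fun p : (Fin 3 → ℝ) × ℝ => ubar p.1 p.2 :=
    hu.differentiable (by simp)
  have hξ₁ : Differentiable ℝ fun p : (Fin 3 → ℝ) × ℝ => ξ p.1 p.2 :=
    hξ.differentiable (by simp)
  have hDx : DifferentiableAt ℝ (fun y => Dbar y t) x := hD₁.curry_left t x
  have hux : DifferentiableAt ℝ (fun y => ubar y t) x := hu₁.curry_left t x
  have hξx : DifferentiableAt ℝ (fun y => ξ y t) x := hξ₁.curry_left t x
  have hcontinuity : deriv (fun s => Dbar x s) t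
      + divergence (fun y => Dbar y t • ubar y t) x = 0 := hcont x t
  rw [divergence_smul hDx hux] at hcontinuity
  have hdiv : divergence (fun y => Dbar y t • ξ y t) x = -D' x t := by
    rw [hD', neg_neg]; rfl
  have hcurl : curl3 (fun y => cross (ubar y t) fun j => Dbar y t * ξ y t j) x i = _ :=
    curl3_cross (w := fun y => Dbar y t • ξ y t) hux (hDx.smul hξx) i
  rw [hdiv] at hcurl
  simp only [Pi.smul_apply, smul_eq_mul, map_smul] at hcurl
  rw [fderiv_fun_mul hDx (differentiableAt_pi.1 hξx i)] at hcurl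
  rw [hu', hcurl, deriv_fun_mul ((hD₁.curry_right x).differentiableAt)
    (differentiableAt_pi.1 ((hξ₁.curry_right x) t) i)]
  simp only [add_apply, smul_apply, smul_eq_mul]
  linear_combination -ξ x t i * hcontinuity
end
end

section
/- Cauchy's solution of the homogeneous u′-equation (frozen-in vector fields). Let u : ℝⁿ × ℝ → ℝⁿ be smooth, and let φ : ℝ × ℝⁿ → ℝⁿ be smooth with ∂ₜφ(t,x₀) = u(φ(t,x₀), t), φ(0,x₀) = x₀, and φ(t,·) a diffeomorphism of ℝⁿ for every t (with smooth dependence of the inverse on (t,x)). Given a smooth ξ⁰ : ℝⁿ → ℝⁿ, define the time-dependent vector field ξ by ξ(φ(t,x₀), t) = D_{x₀}φ(t,x₀) · ξ⁰(x₀). Then ξ is smooth, ξ(x,0) = ξ⁰(x), and ξ satisfies the homogeneous equation ∂ₜξ + (u·∇)ξ − (ξ·∇)u = 0 everywhere. -/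
/-!
Along a trajectory `s ↦ φ(s, x₀)` the field is `D_{x₀}φ(s, x₀) ξ⁰(x₀)`. Differentiating in `s` and
exchanging the `s`- and `x₀`-derivatives (symmetry of the second derivative of `φ`) turns
`∂ₛ D_{x₀}φ` into `D_{x₀}(u(φ(s, x₀), s)) = Du · D_{x₀}φ`, so the derivative of `ξ` along the flow
is `(ξ·∇)u`; by the chain rule it is also `∂ₜξ + (u·∇)ξ`. In Lie form, `∂ₜξ + [u, ξ] = 0`.
Smoothness follows from `ξ(x, t) = D_{x₀}φ(t, η(t, x)) ξ⁰(η(t, x))`.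
-/

noncomputable section

section Calculus

variable {E F G : Type*} [NormedAddCommGroup E] [NormedSpace ℝ E]
  [NormedAddCommGroup F] [NormedSpace ℝ F] [NormedAddCommGroup G] [NormedSpace ℝ G]

theorem Differentiable.uncurry_left {f : E → F → G} (hf : Differentiable ℝ (Function.uncurry f))
    (b : F) : Differentiable ℝ (fun a => f a b) :=
  hf.comp (differentiable_id.prodMk (differentiable_const b))

theorem Differentiable.uncurry_right {f : E → F → G} (hf : Differentiable ℝ (Function.uncurry f))
    (a : E) : Differentiable ℝ (f a) :=
  hf.comp ((differentiable_const a).prodMk differentiable_id)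

theorem fderiv_partial_fst {f : E × F → G} {a : E} {b : F}
    (hf : DifferentiableAt ℝ f (a, b)) (w : E) :
    fderiv ℝ (fun a' => f (a', b)) a w = fderiv ℝ f (a, b) (w, 0) := by
  have h : HasFDerivAt (fun a' => f (a', b))
      ((fderiv ℝ f (a, b)).comp (ContinuousLinearMap.inl ℝ E F)) a :=
    hf.hasFDerivAt.comp a (hasFDerivAt_prodMk_left a b)
  simp [h.fderiv]

theorem fderiv_partial_snd {f : E × F → G} {a : E} {b : F}
    (hf : DifferentiableAt ℝ f (a, b)) (w : F) :
    fderiv ℝ (fun b' => f (a, b')) b w = fderiv ℝ f (a, b) (0, w) := by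
  have h : HasFDerivAt (fun b' => f (a, b'))
      ((fderiv ℝ f (a, b)).comp (ContinuousLinearMap.inr ℝ E F)) b :=
    hf.hasFDerivAt.comp b (hasFDerivAt_prodMk_right a b)
  simp [h.fderiv]

theorem hasFDerivAt_fderiv_apply {f : E → F} {x : E} (hf : DifferentiableAt ℝ (fderiv ℝ f) x)
    (w : E) :
    HasFDerivAt (fun y => fderiv ℝ f y w) ((fderiv ℝ (fderiv ℝ f) x).flip w) x := by
  simpa using hf.hasFDerivAt.clm_apply (hasFDerivAt_const w x)

theorem hasDerivAt_comp_curve {f : E → ℝ → F} {c : ℝ → E} {c' : E} {t : ℝ}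
    (hf : DifferentiableAt ℝ (Function.uncurry f) (c t, t)) (hc : HasDerivAt c c' t) :
    HasDerivAt (fun s => f (c s) s)
      (fderiv ℝ (fun y => f y t) (c t) c' + deriv (f (c t)) t) t := by
  have h : HasDerivAt (fun s => f (c s) s) (fderiv ℝ (Function.uncurry f) (c t, t) (c', 1)) t :=
    hf.hasFDerivAt.comp_hasDerivAt_of_eq t (hc.prodMk (hasDerivAt_id t)) rfl
  have hsplit : ((c', 1) : E × ℝ) = (c', 0) + (0, 1) := by simp
  rwa [hsplit, map_add, ← fderiv_partial_fst hf, ← fderiv_partial_snd hf,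
    fderiv_apply_one_eq_deriv] at h

theorem hasDerivAt_fderiv_apply_of_contDiff {φ : ℝ → E → F}
    (hφ : ContDiff ℝ 2 (Function.uncurry φ)) (t : ℝ) (x v : E) :
    HasDerivAt (fun s => fderiv ℝ (φ s) x v)
      (fderiv ℝ (fun y => deriv (fun s => φ s y) t) x v) t := by
  set f := Function.uncurry φ
  have hf : Differentiable ℝ f := hφ.differentiable two_ne_zero
  have hf' : Differentiable ℝ (fderiv ℝ f) :=
    (hφ.fderiv_right (m := 1) le_rfl).differentiable one_ne_zero
  have hspace : (fun s => fderiv ℝ (φ s) x v) = fun s => fderiv ℝ f (s, x) (0, v) :=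
    funext fun s => fderiv_partial_snd (hf (s, x)) v
  have htime : (fun y => deriv (fun s => φ s y) t) = fun y => fderiv ℝ f (t, y) (1, 0) :=
    funext fun y => by
      rw [← fderiv_apply_one_eq_deriv]; exact fderiv_partial_fst (hf (t, y)) 1
  have hsymm : IsSymmSndFDerivAt ℝ f (t, x) :=
    hφ.contDiffAt.isSymmSndFDerivAt (by simp [minSmoothness_of_isRCLikeNormedField])
  have htime' := hasFDerivAt_fderiv_apply (hf' (t, x)) (1, 0)
  have h : HasDerivAt (fun s => fderiv ℝ f (s, x) (0, v))
      (fderiv ℝ (fderiv ℝ f) (t, x) (1, 0) (0, v)) t :=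
    (hasFDerivAt_fderiv_apply (hf' (t, x)) (0, v)).comp_hasDerivAt_of_eq t
      ((hasDerivAt_id t).prodMk (hasDerivAt_const t x)) rfl
  rwa [hspace, htime, fderiv_partial_snd htime'.differentiableAt, htime'.fderiv,
    ContinuousLinearMap.flip_apply, ← hsymm]

end Calculus

section Flow

variable {E : Type*} [NormedAddCommGroup E] [NormedSpace ℝ E]

theorem contDiff_cauchy_formula {n : WithTop ℕ∞} {φ η : ℝ → E → E} {ξ0 : E → E}
    (hφ : ContDiff ℝ (n + 1) (Function.uncurry φ)) (hη : ContDiff ℝ n (Function.uncurry η))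
    (hξ0 : ContDiff ℝ n ξ0) :
    ContDiff ℝ n (fun p : E × ℝ => fderiv ℝ (φ p.2) (η p.2 p.1) (ξ0 (η p.2 p.1))) := by
  have hη' : ContDiff ℝ n (fun p : E × ℝ => η p.2 p.1) :=
    hη.comp (contDiff_snd.prodMk contDiff_fst)
  exact ContDiff.fderiv_apply (f := fun p : E × ℝ => φ p.2)
    (hφ.comp (contDiff_snd.comp contDiff_fst |>.prodMk contDiff_snd)) hη' (hξ0.comp hη') le_rfl

theorem hasDerivAt_fderiv_flow {u : E → ℝ → E} {φ : ℝ → E → E} {t : ℝ} {x : E}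
    (hφ : ContDiff ℝ 2 (Function.uncurry φ)) (hu : DifferentiableAt ℝ (fun y => u y t) (φ t x))
    (hflow : ∀ y, deriv (fun s => φ s y) t = u (φ t y) t) (v : E) :
    HasDerivAt (fun s => fderiv ℝ (φ s) x v)
      (fderiv ℝ (fun y => u y t) (φ t x) (fderiv ℝ (φ t) x v)) t := by
  have h := hasDerivAt_fderiv_apply_of_contDiff hφ t x v
  rwa [funext hflow, fderiv_fun_comp x hu ((hφ.differentiable two_ne_zero).uncurry_right t x)] at h

theorem deriv_add_lieBracket_eq_zero_of_cauchy_formula {u : E → ℝ → E} {φ : ℝ → E → E}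
    {ξ0 : E → E} {ξ : E → ℝ → E}
    (hu : Differentiable ℝ (Function.uncurry u)) (hφ : ContDiff ℝ 2 (Function.uncurry φ))
    (hflow : ∀ t x₀, deriv (fun s => φ s x₀) t = u (φ t x₀) t)
    (hsurj : ∀ t, Function.Surjective (φ t)) (hξ : Differentiable ℝ (Function.uncurry ξ))
    (hξdef : ∀ t x₀, ξ (φ t x₀) t = fderiv ℝ (φ t) x₀ (ξ0 x₀)) (x : E) (t : ℝ) :
    deriv (ξ x) t + VectorField.lieBracket ℝ (u · t) (ξ · t) x = 0 := by
  obtain ⟨x₀, rfl⟩ := hsurj t x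
  have hcurve : HasDerivAt (fun s => φ s x₀) (u (φ t x₀) t) t := by
    rw [← hflow]
    exact ((hφ.differentiable two_ne_zero).uncurry_left x₀ t).hasDerivAt
  have h_chain := hasDerivAt_comp_curve (hξ _) hcurve
  have h_flow := hasDerivAt_fderiv_flow hφ (hu.uncurry_left t (φ t x₀)) (hflow t) (ξ0 x₀)
  simp_rw [← hξdef] at h_flow
  rw [VectorField.lieBracket, ← h_chain.unique h_flow]
  abel

end Flow

theorem jacobian_mulVec {n : ℕ} {f : (Fin n → ℝ) → (Fin n → ℝ)} {x : Fin n → ℝ}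
    (hf : DifferentiableAt ℝ f x) (v : Fin n → ℝ) :
    (jacobian f x).mulVec v = fderiv ℝ f x v := by
  have h : jacobian f x = LinearMap.toMatrix' (fderiv ℝ f x : (Fin n → ℝ) →ₗ[ℝ] Fin n → ℝ) := by
    ext i j
    simp [jacobian, LinearMap.toMatrix'_apply, fderiv_apply hf i]
  rw [h, LinearMap.toMatrix'_mulVec]
  rfl

theorem cauchy_solution_homogeneous_u_prime_general
    {n : ℕ}
    (u : (Fin n → ℝ) → ℝ → (Fin n → ℝ))
    (φ η : ℝ → (Fin n → ℝ) → (Fin n → ℝ))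
    (ξ0 : (Fin n → ℝ) → (Fin n → ℝ))
    (ξ : (Fin n → ℝ) → ℝ → (Fin n → ℝ))
    -- smoothness
    (hu : ContDiff ℝ (⊤ : ℕ∞) (fun p : (Fin n → ℝ) × ℝ => u p.1 p.2))
    (hφ : ContDiff ℝ (⊤ : ℕ∞) (fun p : ℝ × (Fin n → ℝ) => φ p.1 p.2))
    (hξ0 : ContDiff ℝ (⊤ : ℕ∞) ξ0)
    -- φ is the flow map of u with φ(0,·) = id
    (hflow : ∀ t x₀ i, deriv (fun s => φ s x₀ i) t = u (φ t x₀) t i)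
    (hinit : ∀ x₀, φ 0 x₀ = x₀)
    -- φ(t,·) is a diffeomorphism of ℝⁿ for every t, with smooth inverse η(t,·)
    (hη : ContDiff ℝ (⊤ : ℕ∞) (fun p : ℝ × (Fin n → ℝ) => η p.1 p.2))
    (hφη : ∀ t x, φ t (η t x) = x)
    -- definition of ξ : ξ(φ(t,x₀),t) = D_{x₀}φ(t,x₀)·ξ⁰(x₀)
    (hξdef : ∀ t x₀, ξ (φ t x₀) t = (jacobian (φ t) x₀).mulVec (ξ0 x₀)) :
    -- conclusion : ξ is smooth, ξ(·,0) = ξ⁰, and ξ solves the homogeneous equation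
    ContDiff ℝ (⊤ : ℕ∞) (fun p : (Fin n → ℝ) × ℝ => ξ p.1 p.2)
    ∧ (∀ x, ξ x 0 = ξ0 x)
    ∧ (∀ x t i,
        deriv (fun s => ξ x s i) t
          + fderiv ℝ (fun y => ξ y t i) x (u x t)
          - fderiv ℝ (fun y => u y t i) x (ξ x t) = 0) := by
  have hφ2 : ContDiff ℝ 2 (Function.uncurry φ) := hφ.of_le (WithTop.coe_le_coe.2 le_top)
  have hφ_diff : Differentiable ℝ (Function.uncurry φ) := hφ2.differentiable two_ne_zero
  have hu_diff : Differentiable ℝ (Function.uncurry u) := hu.differentiable (by simp)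
  have hξdef' : ∀ t x₀, ξ (φ t x₀) t = fderiv ℝ (φ t) x₀ (ξ0 x₀) := fun t x₀ => by
    rw [hξdef, jacobian_mulVec (hφ_diff.uncurry_right t x₀)]
  have hξ : ContDiff ℝ (⊤ : ℕ∞) (fun p : (Fin n → ℝ) × ℝ => ξ p.1 p.2) := by
    convert contDiff_cauchy_formula hφ hη hξ0 using 2 with p
    rw [← hξdef', hφη]
  have hξ_diff : Differentiable ℝ (Function.uncurry ξ) := hξ.differentiable (by simp)
  have hflow' : ∀ t x₀, deriv (fun s => φ s x₀) t = u (φ t x₀) t := fun t x₀ => by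
    rw [deriv_pi fun i => differentiableAt_pi.1 (hφ_diff.uncurry_left x₀ t) i]
    exact funext (hflow t x₀)
  refine ⟨hξ, fun x => by simpa [funext hinit] using hξdef' 0 x, fun x t i => ?_⟩
  have h := congrFun (deriv_add_lieBracket_eq_zero_of_cauchy_formula hu_diff hφ2 hflow'
    (fun t x => ⟨η t x, hφη t x⟩) hξ_diff hξdef' x t) i
  rw [deriv_pi fun i => differentiableAt_pi.1 (hξ_diff.uncurry_right x t) i] at h
  rw [fderiv_apply (hξ_diff.uncurry_left t x) i, fderiv_apply (hu_diff.uncurry_left t x) i]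
  simpa [VectorField.lieBracket, add_sub_assoc] using h

/-- **Cauchy's solution of the homogeneous u′-equation (frozen-in vector fields).**
Let `φ` be the flow of `u` with smooth inverse, and define `ξ` by
`ξ(φ(t,x₀),t) = D_{x₀}φ(t,x₀)·ξ⁰(x₀)`.  Then `ξ` is smooth, `ξ(·,0) = ξ⁰`, and
`ξ` satisfies `∂ₜξ + (u·∇)ξ − (ξ·∇)u = 0` everywhere. -/
theorem cauchy_solution_homogeneous_u_prime
    {n : ℕ}
    (u : (Fin n → ℝ) → ℝ → (Fin n → ℝ))
    (φ η : ℝ → (Fin n → ℝ) → (Fin n → ℝ))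
    (ξ0 : (Fin n → ℝ) → (Fin n → ℝ))
    (ξ : (Fin n → ℝ) → ℝ → (Fin n → ℝ))
    -- smoothness
    (hu : ContDiff ℝ (⊤ : ℕ∞) (fun p : (Fin n → ℝ) × ℝ => u p.1 p.2))
    (hφ : ContDiff ℝ (⊤ : ℕ∞) (fun p : ℝ × (Fin n → ℝ) => φ p.1 p.2))
    (hξ0 : ContDiff ℝ (⊤ : ℕ∞) ξ0)
    -- φ is the flow map of u with φ(0,·) = id
    (hflow : ∀ t x₀ i, deriv (fun s => φ s x₀ i) t = u (φ t x₀) t i)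
    (hinit : ∀ x₀, φ 0 x₀ = x₀)
    -- φ(t,·) is a diffeomorphism of ℝⁿ for every t, with smooth inverse η(t,·)
    (hη : ContDiff ℝ (⊤ : ℕ∞) (fun p : ℝ × (Fin n → ℝ) => η p.1 p.2))
    (hφη : ∀ t x, φ t (η t x) = x)
    (hηφ : ∀ t x, η t (φ t x) = x)
    -- definition of ξ : ξ(φ(t,x₀),t) = D_{x₀}φ(t,x₀)·ξ⁰(x₀)
    (hξdef : ∀ t x₀, ξ (φ t x₀) t = (jacobian (φ t) x₀).mulVec (ξ0 x₀)) :
    -- conclusion : ξ is smooth, ξ(·,0) = ξ⁰, and ξ solves the homogeneous equation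
    ContDiff ℝ (⊤ : ℕ∞) (fun p : (Fin n → ℝ) × ℝ => ξ p.1 p.2)
    ∧ (∀ x, ξ x 0 = ξ0 x)
    ∧ (∀ x t i,
        deriv (fun s => ξ x s i) t
          + fderiv ℝ (fun y => ξ y t i) x (u x t)
          - fderiv ℝ (fun y => u y t i) x (ξ x t) = 0) :=
  cauchy_solution_homogeneous_u_prime_general u φ η ξ0 ξ hu hφ hξ0 hflow hinit hη hφη hξdef
end
end

section
/- Conservation of the H¹ energy for the incompressible Euler-alpha (Lagrangian-averaged Euler) equations. Work in ℝ³ and let α > 0 be a constant. Let u : ℝ³ × ℝ → ℝ³ and p : ℝ³ × ℝ → ℝ be smooth with div u(·,t) = 0 for every t, and suppose there is a compact set K ⊂ ℝ³ with u(·,t) and p(·,t) supported in K for every t. Set v := u − α²Δu (Laplacian taken componentwise in the space variable) and assume the Euler-alpha equation ∂ₜv + (u·∇)v + v_j∇u^j + ∇p = 0 holds everywhere. Then the energy E(t) := ½ ∫_{ℝ³} ( |u(x,t)|² + α² |∇u(x,t)|² ) dx is constant in time, where |∇u|² = Σ_{i,j} (∂uⁱ/∂xʲ)². -/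
/-!
Write `e = |u|² + α²|∇u|²` and `w = ∂ₜu`. Since `v = u − α²Δu`, the product rule gives
`∂ₜe = 2 u·∂ₜv + div (2α² Σᵢ uᵢ ∇wᵢ)`. Contracting the Euler-alpha equation with `u` gives
`u·∂ₜv = −(u·∇)(u·v + p)`: the term `uⁱ vⱼ ∂ᵢuʲ` equals `vⱼ (u·∇)uʲ` and completes the product
rule for `(u·∇)(u·v)`. As `div u = 0`, this is `−div ((u·v + p) u)`. Hence `∂ₜe` is the spatial
divergence of a flux supported in `K`, whose integral over space vanishes, and differentiating
under the integral sign gives `E' = 0`.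
-/

open scoped BigOperators
open MeasureTheory

noncomputable section

/-- Componentwise spatial Laplacian of a scalar function on ℝⁿ. -/
def lap {n : ℕ} (f : (Fin n → ℝ) → ℝ) (x : Fin n → ℝ) : ℝ :=
  ∑ j, fderiv ℝ (fun y => fderiv ℝ f y (Pi.single j 1)) x (Pi.single j 1)

open scoped ContDiff
open Function

section DirDeriv

variable {E : Type*} [NormedAddCommGroup E] [NormedSpace ℝ E]

def dirDeriv (w : E) (F : E → ℝ) : E → ℝ := fun q => fderiv ℝ F q w

@[fun_prop]
lemma contDiff_dirDeriv {F : E → ℝ} (hF : ContDiff ℝ ∞ F) (w : E) :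
    ContDiff ℝ ∞ (dirDeriv w F) :=
  (hF.fderiv_right (by simp)).clm_apply contDiff_const

@[fun_prop]
lemma differentiable_dirDeriv {F : E → ℝ} (hF : ContDiff ℝ ∞ F) (w : E) :
    Differentiable ℝ (dirDeriv w F) :=
  (contDiff_dirDeriv hF w).differentiable (by simp)

variable {f g : E → ℝ} {w q : E}

lemma dirDeriv_add (hf : DifferentiableAt ℝ f q) (hg : DifferentiableAt ℝ g q) :
    dirDeriv w (fun r => f r + g r) q = dirDeriv w f q + dirDeriv w g q := by
  simp [dirDeriv, fderiv_fun_add hf hg]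

lemma dirDeriv_sub (hf : DifferentiableAt ℝ f q) (hg : DifferentiableAt ℝ g q) :
    dirDeriv w (fun r => f r - g r) q = dirDeriv w f q - dirDeriv w g q := by
  simp [dirDeriv, fderiv_fun_sub hf hg]

lemma dirDeriv_mul (hf : DifferentiableAt ℝ f q) (hg : DifferentiableAt ℝ g q) :
    dirDeriv w (fun r => f r * g r) q = dirDeriv w f q * g q + f q * dirDeriv w g q := by
  simp [dirDeriv, fderiv_fun_mul hf hg]
  ring

lemma dirDeriv_const_mul (c : ℝ) (hf : DifferentiableAt ℝ f q) :
    dirDeriv w (fun r => c * f r) q = c * dirDeriv w f q := by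
  simp [dirDeriv, fderiv_const_mul hf]

lemma dirDeriv_pow (n : ℕ) (hf : DifferentiableAt ℝ f q) :
    dirDeriv w (fun r => f r ^ n) q = n * f q ^ (n - 1) * dirDeriv w f q := by
  simp [dirDeriv, fderiv_fun_pow n hf]

lemma dirDeriv_sum {ι : Type*} (s : Finset ι) {f : ι → E → ℝ}
    (hf : ∀ i ∈ s, DifferentiableAt ℝ (f i) q) :
    dirDeriv w (fun r => ∑ i ∈ s, f i r) q = ∑ i ∈ s, dirDeriv w (f i) q := by
  simp [dirDeriv, fderiv_fun_sum hf]

lemma dirDeriv_comm {F : E → ℝ} (hF : ContDiff ℝ 2 F) (w w' : E) :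
    dirDeriv w (dirDeriv w' F) = dirDeriv w' (dirDeriv w F) := by
  have second_deriv (v v' : E) (q : E) :
      dirDeriv v (dirDeriv v' F) q = fderiv ℝ (fderiv ℝ F) q v v' := by
    have : DifferentiableAt ℝ (fderiv ℝ F) q :=
      (hF.fderiv_right (m := 1) le_rfl).differentiable one_ne_zero q
    change fderiv ℝ (fun r => fderiv ℝ F r v') q v = _
    simp [fderiv_clm_apply this (differentiableAt_const v')]
  ext q
  rw [second_deriv, second_deriv]
  exact (hF.contDiffAt.isSymmSndFDerivAt (by simp)).eq w w'

lemma support_dirDeriv_subset (F : E → ℝ) (w : E) : support (dirDeriv w F) ⊆ tsupport F :=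
  fun q hq => support_fderiv_subset ℝ (fun h : fderiv ℝ F q = 0 => hq (by simp [dirDeriv, h]))

end DirDeriv

lemma hasCompactSupport_slice {X T : Type*} [TopologicalSpace X] [R1Space X] {F : X × T → ℝ}
    {K : Set X} (hK : IsCompact K) (hF : support F ⊆ Prod.fst ⁻¹' K) (t : T) :
    HasCompactSupport (fun x => F (x, t)) :=
  HasCompactSupport.intro hK fun _ hx => notMem_support.mp fun h => hx (hF h)

lemma integrable_slice {X T : Type*} [TopologicalSpace X] [R1Space X] [MeasurableSpace X]
    [OpensMeasurableSpace X] [TopologicalSpace T] {μ : Measure X} [IsFiniteMeasureOnCompacts μ]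
    {F : X × T → ℝ} {K : Set X} (hK : IsCompact K)
    (hc : Continuous F) (hF : support F ⊆ Prod.fst ⁻¹' K) (t : T) :
    Integrable (fun x => F (x, t)) μ :=
  (hc.comp (continuous_id.prodMk continuous_const)).integrable_of_hasCompactSupport
    (hasCompactSupport_slice hK hF t)

lemma support_apply_subset {X ι M : Type*} [Zero M] (U : X → ι → M) (i : ι) :
    support (U · i) ⊆ support U :=
  support_comp_subset (g := fun v : ι → M => v i) rfl U

section SpaceTime

variable {E : Type*} [NormedAddCommGroup E] [NormedSpace ℝ E] {F : E × ℝ → ℝ} {x : E} {t : ℝ}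

lemma fderiv_slice_apply (hF : DifferentiableAt ℝ F (x, t)) (w : E) :
    fderiv ℝ (fun y => F (y, t)) x w = dirDeriv (w, 0) F (x, t) := by
  have h : HasFDerivAt (fun y => F (y, t))
      ((fderiv ℝ F (x, t)).comp ((ContinuousLinearMap.id ℝ E).prod 0)) x :=
    hF.hasFDerivAt.comp x ((hasFDerivAt_id x).prodMk (hasFDerivAt_const t x))
  simp [h.fderiv, dirDeriv]

lemma fderiv_slice_apply_apply {ι : Type*} {U : E × ℝ → ι → ℝ} (hU : DifferentiableAt ℝ U (x, t))
    (i : ι) (w : E) :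
    fderiv ℝ (fun y => U (y, t) i) x w = dirDeriv (w, 0) (U · i) (x, t) :=
  fderiv_slice_apply (F := (U · i)) (differentiableAt_pi.1 hU i) w

lemma hasDerivAt_slice (hF : DifferentiableAt ℝ F (x, t)) :
    HasDerivAt (fun s => F (x, s)) (dirDeriv (0, 1) F (x, t)) t :=
  hF.hasFDerivAt.comp_hasDerivAt t ((hasDerivAt_const t x).prodMk (hasDerivAt_id t))

lemma support_dirDeriv_subset_fst_preimage {F : E × ℝ → ℝ} {K : Set E} (hK : IsClosed K)
    (hF : support F ⊆ Prod.fst ⁻¹' K) (w : E × ℝ) :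
    support (dirDeriv w F) ⊆ Prod.fst ⁻¹' K :=
  (support_dirDeriv_subset F w).trans (closure_minimal hF (hK.preimage continuous_fst))

end SpaceTime

section Integral

variable {E : Type*} [NormedAddCommGroup E] [NormedSpace ℝ E] [MeasurableSpace E] [BorelSpace E]
  {μ : Measure E}

lemma integral_dirDeriv_eq_zero [FiniteDimensional ℝ E] [μ.IsAddHaarMeasure] {F : E → ℝ}
    (hF : ContDiff ℝ 1 F) (hc : HasCompactSupport F) (w : E) :
    ∫ x, dirDeriv w F x ∂μ = 0 := by
  have hF' : Continuous (fun x => fderiv ℝ F x w) :=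
    (hF.continuous_fderiv one_ne_zero).clm_apply continuous_const
  have h := integral_mul_fderiv_eq_neg_fderiv_mul_of_integrable (μ := μ)
    (f := fun _ => (1 : ℝ)) (g := F) (v := w) (by simp)
    (by simpa using hF'.integrable_of_hasCompactSupport (hc.fderiv_apply (𝕜 := ℝ) w))
    (by simpa using hF.continuous.integrable_of_hasCompactSupport hc)
    (fun x _ => differentiableAt_const 1) (fun x _ => hF.differentiable one_ne_zero x)
  simpa [dirDeriv] using h

lemma hasDerivAt_integral_slice [IsFiniteMeasureOnCompacts μ] {F : E × ℝ → ℝ} {K : Set E}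
    (hF : ContDiff ℝ 1 F) (hK : IsCompact K) (hsupp : support F ⊆ Prod.fst ⁻¹' K) (t₀ : ℝ) :
    HasDerivAt (fun t => ∫ x, F (x, t) ∂μ) (∫ x, dirDeriv (0, 1) F (x, t₀) ∂μ) t₀ := by
  have hF' : Continuous (dirDeriv (0, 1) F) :=
    (hF.continuous_fderiv one_ne_zero).clm_apply continuous_const
  have hslice : ∀ {G : E × ℝ → ℝ}, Continuous G → ∀ t, Continuous (fun x => G (x, t)) :=
    fun hG t => hG.comp (continuous_id.prodMk continuous_const)
  obtain ⟨C, hC⟩ := (hK.prod (isCompact_closedBall t₀ 1)).exists_bound_of_continuousOn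
    hF'.continuousOn
  have hbound : ∀ x, ∀ t ∈ Metric.ball t₀ 1,
      ‖dirDeriv (0, 1) F (x, t)‖ ≤ K.indicator (fun _ => C) x := by
    intro x t ht
    by_cases hx : x ∈ K
    · simpa [hx] using hC (x, t) ⟨hx, Metric.ball_subset_closedBall ht⟩
    · have : dirDeriv (0, 1) F (x, t) = 0 :=
        notMem_support.mp fun h => hx (support_dirDeriv_subset_fst_preimage hK.isClosed hsupp _ h)
      simp [this, hx]
  exact (hasDerivAt_integral_of_dominated_loc_of_deriv_le (Metric.ball_mem_nhds t₀ one_pos)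
    (.of_forall fun t => (hslice hF.continuous t).aestronglyMeasurable)
    (integrable_slice hK hF.continuous hsupp t₀) (hslice hF' t₀).aestronglyMeasurable
    (.of_forall hbound) ((integrable_indicator_iff hK.measurableSet).mpr
      (integrableOn_const hK.measure_lt_top.ne))
    (.of_forall fun x t _ => hasDerivAt_slice (hF.differentiable one_ne_zero _))).2

theorem integral_slice_eq_of_dirDeriv_eq_sum [FiniteDimensional ℝ E] [μ.IsAddHaarMeasure]
    {ι : Type*} [Fintype ι] {e : E × ℝ → ℝ} {Φ : ι → E × ℝ → ℝ} {w : ι → E} {K : Set E}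
    (he : ContDiff ℝ 1 e) (hΦ : ∀ j, ContDiff ℝ 1 (Φ j)) (hK : IsCompact K)
    (he_supp : support e ⊆ Prod.fst ⁻¹' K) (hΦ_supp : ∀ j, support (Φ j) ⊆ Prod.fst ⁻¹' K)
    (hcons : ∀ q, dirDeriv (0, 1) e q = ∑ j, dirDeriv (w j, 0) (Φ j) q) (t₁ t₂ : ℝ) :
    ∫ x, e (x, t₁) ∂μ = ∫ x, e (x, t₂) ∂μ := by
  have hflux : ∀ j t, ∫ x, dirDeriv (w j, 0) (Φ j) (x, t) ∂μ = 0 := by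
    intro j t
    have hslice : ContDiff ℝ 1 (fun x => Φ j (x, t)) :=
      (hΦ j).comp (contDiff_id.prodMk contDiff_const)
    calc ∫ x, dirDeriv (w j, 0) (Φ j) (x, t) ∂μ
        = ∫ x, dirDeriv (w j) (fun y => Φ j (y, t)) x ∂μ := by
          congr 1 with x
          exact (fderiv_slice_apply ((hΦ j).differentiable one_ne_zero _) (w j)).symm
      _ = 0 := integral_dirDeriv_eq_zero hslice (hasCompactSupport_slice hK (hΦ_supp j) t) (w j)
  have hderiv : ∀ t, HasDerivAt (fun t => ∫ x, e (x, t) ∂μ) 0 t := by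
    intro t
    convert hasDerivAt_integral_slice (μ := μ) he hK he_supp t using 1
    simp_rw [hcons]
    rw [integral_finsetSum]
    · simp [hflux]
    · intro j _
      exact integrable_slice hK (((hΦ j).continuous_fderiv one_ne_zero).clm_apply continuous_const)
        (support_dirDeriv_subset_fst_preimage hK.isClosed (hΦ_supp j) _) t
  exact is_const_of_deriv_eq_zero (fun t => (hderiv t).differentiableAt)
    (fun t => (hderiv t).deriv) t₁ t₂

end Integral

section EulerAlpha

variable {ι : Type*} [Fintype ι] [DecidableEq ι]

local notation "∂ₜ" => dirDeriv ((0 : ι → ℝ), (1 : ℝ))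
local notation "∂[" j "]" => dirDeriv ((Pi.single j (1 : ℝ) : ι → ℝ), (0 : ℝ))

def energyIntegrand (α : ℝ) (U : (ι → ℝ) × ℝ → ι → ℝ) (q : (ι → ℝ) × ℝ) : ℝ :=
  ∑ i, U q i ^ 2 + α ^ 2 * ∑ i, ∑ j, ∂[j] (U · i) q ^ 2

def spatialLap (F : (ι → ℝ) × ℝ → ℝ) (q : (ι → ℝ) × ℝ) : ℝ := ∑ j, ∂[j] (∂[j] F) q

@[fun_prop]
lemma contDiff_spatialLap {F : (ι → ℝ) × ℝ → ℝ} (hF : ContDiff ℝ ∞ F) :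
    ContDiff ℝ ∞ (spatialLap F) := by
  unfold spatialLap
  fun_prop

@[fun_prop]
lemma differentiable_spatialLap {F : (ι → ℝ) × ℝ → ℝ} (hF : ContDiff ℝ ∞ F) :
    Differentiable ℝ (spatialLap F) :=
  (contDiff_spatialLap hF).differentiable (by simp)

lemma dirDeriv_spatialLap {F : (ι → ℝ) × ℝ → ℝ} (hF : ContDiff ℝ ∞ F) (w : (ι → ℝ) × ℝ) :
    dirDeriv w (spatialLap F) = spatialLap (dirDeriv w F) := by
  have comm : ∀ G : (ι → ℝ) × ℝ → ℝ, ContDiff ℝ ∞ G →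
      ∀ w w', dirDeriv w (dirDeriv w' G) = dirDeriv w' (dirDeriv w G) :=
    fun G hG => dirDeriv_comm (hG.of_le (WithTop.coe_le_coe.mpr le_top))
  ext q
  unfold spatialLap
  rw [dirDeriv_sum _ fun j _ => by fun_prop]
  refine Finset.sum_congr rfl fun j _ => ?_
  rw [comm _ (by fun_prop) w, comm F hF w]

lemma dirDeriv_time_energyIntegrand {α : ℝ} {U V : (ι → ℝ) × ℝ → ι → ℝ} (hU : ContDiff ℝ ∞ U)
    (hV : ∀ q i, V q i = U q i - α ^ 2 * spatialLap (U · i) q) (q : (ι → ℝ) × ℝ) :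
    ∂ₜ (energyIntegrand α U) q = 2 * ∑ i, U q i * ∂ₜ (V · i) q
      + 2 * α ^ 2 * ∑ j, ∂[j] (fun r => ∑ i, U r i * ∂[j] (∂ₜ (U · i)) r) q := by
  have hUd : Differentiable ℝ U := hU.differentiable (by simp)
  have hVt : ∀ i, ∂ₜ (V · i) q = ∂ₜ (U · i) q - α ^ 2 * spatialLap (∂ₜ (U · i)) q := by
    intro i
    rw [show (V · i) = fun r => U r i - α ^ 2 * spatialLap (U · i) r from funext (hV · i)]
    simp (disch := fun_prop) only [dirDeriv_sub, dirDeriv_const_mul, dirDeriv_spatialLap]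
  have hcomm : ∀ i j, ∂ₜ (∂[j] (U · i)) = ∂[j] (∂ₜ (U · i)) := fun i j =>
    dirDeriv_comm ((show ContDiff ℝ ∞ (U · i) by fun_prop).of_le
      (WithTop.coe_le_coe.mpr le_top)) _ _
  unfold energyIntegrand
  simp (disch := fun_prop) only [dirDeriv_add, dirDeriv_const_mul, dirDeriv_sum, dirDeriv_pow,
    dirDeriv_mul, hcomm, hVt, spatialLap]
  rw [Finset.sum_comm (f := fun j i => _ * _ + _)]
  simp only [Nat.cast_ofNat, Nat.add_one_sub_one, pow_one, mul_assoc, ← Finset.mul_sum,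
    Finset.sum_add_distrib, Finset.sum_sub_distrib, mul_sub, mul_left_comm _ (α ^ 2)]
  ring

lemma dirDeriv_space_eq_sum (F : (ι → ℝ) × ℝ → ℝ) (w : ι → ℝ) (q : (ι → ℝ) × ℝ) :
    dirDeriv (w, 0) F q = ∑ j, w j * ∂[j] F q := by
  have hw : ((w, 0) : (ι → ℝ) × ℝ) = ∑ j, w j • ((Pi.single j 1 : ι → ℝ), (0 : ℝ)) := by
    refine Prod.ext ?_ ?_
    · simpa [Prod.fst_sum] using pi_eq_sum_univ' w
    · simp [Prod.snd_sum]
  simp only [dirDeriv, hw, map_sum, map_smul, smul_eq_mul]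

lemma sum_mul_transport_eq_dirDeriv {U V : (ι → ℝ) × ℝ → ι → ℝ} {P : (ι → ℝ) × ℝ → ℝ}
    {q : (ι → ℝ) × ℝ} (hU : DifferentiableAt ℝ U q) (hV : DifferentiableAt ℝ V q)
    (hP : DifferentiableAt ℝ P q) :
    ∑ i, U q i * (dirDeriv (U q, 0) (V · i) q + ∑ j, V q j * ∂[i] (U · j) q + ∂[i] P q)
      = dirDeriv (U q, 0) (fun r => ∑ i, U r i * V r i + P r) q := by
  have hswap : ∑ i, U q i * ∑ j, V q j * ∂[i] (U · j) q
      = ∑ j, dirDeriv (U q, 0) (U · j) q * V q j := by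
    simp only [dirDeriv_space_eq_sum _ (U q), Finset.mul_sum, Finset.sum_mul]
    rw [Finset.sum_comm]
    exact Finset.sum_congr rfl fun _ _ => Finset.sum_congr rfl fun _ _ => by ring
  simp (disch := fun_prop) only [dirDeriv_add, dirDeriv_sum, dirDeriv_mul]
  simp only [mul_add, Finset.sum_add_distrib, hswap, ← dirDeriv_space_eq_sum P]
  ring

lemma sum_dirDeriv_mul_eq {U : (ι → ℝ) × ℝ → ι → ℝ} {f : (ι → ℝ) × ℝ → ℝ} {q : (ι → ℝ) × ℝ}
    (hU : DifferentiableAt ℝ U q) (hf : DifferentiableAt ℝ f q) :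
    ∑ j, ∂[j] (fun r => f r * U r j) q = dirDeriv (U q, 0) f q + f q * ∑ j, ∂[j] (U · j) q := by
  simp (disch := fun_prop) only [dirDeriv_mul]
  rw [Finset.sum_add_distrib, dirDeriv_space_eq_sum f (U q), Finset.mul_sum]
  simp only [mul_comm]

def energyFlux (α : ℝ) (U V : (ι → ℝ) × ℝ → ι → ℝ) (P : (ι → ℝ) × ℝ → ℝ) (j : ι)
    (q : (ι → ℝ) × ℝ) : ℝ :=
  2 * α ^ 2 * ∑ i, U q i * ∂[j] (∂ₜ (U · i)) q - 2 * ((∑ i, U q i * V q i + P q) * U q j)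

lemma contDiff_of_eq_sub_spatialLap {α : ℝ} {U V : (ι → ℝ) × ℝ → ι → ℝ} (hU : ContDiff ℝ ∞ U)
    (hV : ∀ q i, V q i = U q i - α ^ 2 * spatialLap (U · i) q) : ContDiff ℝ ∞ V := by
  rw [show V = fun q i => U q i - α ^ 2 * spatialLap (U · i) q from funext₂ hV]
  fun_prop

theorem dirDeriv_time_energyIntegrand_eq_sum_dirDeriv_energyFlux {α : ℝ}
    {U V : (ι → ℝ) × ℝ → ι → ℝ} {P : (ι → ℝ) × ℝ → ℝ}
    (hU : ContDiff ℝ ∞ U) (hP : Differentiable ℝ P)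
    (hV : ∀ q i, V q i = U q i - α ^ 2 * spatialLap (U · i) q)
    (hdiv : ∀ q, ∑ i, ∂[i] (U · i) q = 0)
    (hmotion : ∀ q i, ∂ₜ (V · i) q + dirDeriv (U q, 0) (V · i) q
      + ∑ j, V q j * ∂[i] (U · j) q + ∂[i] P q = 0)
    (q : (ι → ℝ) × ℝ) :
    ∂ₜ (energyIntegrand α U) q = ∑ j, ∂[j] (energyFlux α U V P j) q := by
  have hUd : Differentiable ℝ U := hU.differentiable (by simp)
  have hVd : Differentiable ℝ V := (contDiff_of_eq_sub_spatialLap hU hV).differentiable (by simp)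
  have hkinetic : ∑ i, U q i * ∂ₜ (V · i) q
      = -∑ j, ∂[j] (fun r => (∑ i, U r i * V r i + P r) * U r j) q := by
    calc ∑ i, U q i * ∂ₜ (V · i) q
        = -∑ i, U q i * (dirDeriv (U q, 0) (V · i) q + ∑ j, V q j * ∂[i] (U · j) q
            + ∂[i] P q) := by
          rw [← Finset.sum_neg_distrib]
          refine Finset.sum_congr rfl fun i _ => ?_
          linear_combination U q i * hmotion q i
      _ = -dirDeriv (U q, 0) (fun r => ∑ i, U r i * V r i + P r) q := by
          rw [sum_mul_transport_eq_dirDeriv (hUd q) (hVd q) (hP q)]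
      _ = -∑ j, ∂[j] (fun r => (∑ i, U r i * V r i + P r) * U r j) q := by
          rw [sum_dirDeriv_mul_eq (hUd q) (by fun_prop), hdiv, mul_zero, add_zero]
  have hflux : ∀ j, energyFlux α U V P j = fun r => 2 * α ^ 2 * ∑ i, U r i * ∂[j] (∂ₜ (U · i)) r
      - 2 * ((∑ i, U r i * V r i + P r) * U r j) := fun j => rfl
  simp (disch := fun_prop) only [hflux, dirDeriv_sub, dirDeriv_const_mul]
  rw [dirDeriv_time_energyIntegrand hU hV q, hkinetic, Finset.sum_sub_distrib, ← Finset.mul_sum,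
    ← Finset.mul_sum]
  ring

section Support

variable {U : (ι → ℝ) × ℝ → ι → ℝ} {K : Set (ι → ℝ)}

lemma support_energyIntegrand_subset (α : ℝ) (hK : IsClosed K)
    (hU : support U ⊆ Prod.fst ⁻¹' K) : support (energyIntegrand α U) ⊆ Prod.fst ⁻¹' K := by
  refine support_subset_iff'.mpr fun q hq => ?_
  have hU0 : ∀ i, U q i = 0 := fun i =>
    notMem_support.mp fun h => hq (((support_apply_subset U i).trans hU) h)
  have hdU0 : ∀ i j, ∂[j] (U · i) q = 0 := fun i j => notMem_support.mp fun h =>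
    hq (support_dirDeriv_subset_fst_preimage hK ((support_apply_subset U i).trans hU) _ h)
  simp [energyIntegrand, hU0, hdU0]

lemma support_energyFlux_subset (α : ℝ) (V : (ι → ℝ) × ℝ → ι → ℝ) (P : (ι → ℝ) × ℝ → ℝ)
    (j : ι) (hU : support U ⊆ Prod.fst ⁻¹' K) : support (energyFlux α U V P j) ⊆ Prod.fst ⁻¹' K :=
  support_subset_iff'.mpr fun q hq => by
    have hU0 : ∀ i, U q i = 0 := fun i =>
      notMem_support.mp fun h => hq (((support_apply_subset U i).trans hU) h)
    simp [energyFlux, hU0]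

end Support

theorem integral_energyIntegrand_eq {α : ℝ} {U V : (ι → ℝ) × ℝ → ι → ℝ}
    {P : (ι → ℝ) × ℝ → ℝ} {K : Set (ι → ℝ)} (hU : ContDiff ℝ ∞ U) (hP : ContDiff ℝ ∞ P)
    (hV : ∀ q i, V q i = U q i - α ^ 2 * spatialLap (U · i) q)
    (hdiv : ∀ q, ∑ i, ∂[i] (U · i) q = 0)
    (hmotion : ∀ q i, ∂ₜ (V · i) q + dirDeriv (U q, 0) (V · i) q
      + ∑ j, V q j * ∂[i] (U · j) q + ∂[i] P q = 0)
    (hK : IsCompact K) (hsupp : support U ⊆ Prod.fst ⁻¹' K) (t₁ t₂ : ℝ) :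
    ∫ x, energyIntegrand α U (x, t₁) = ∫ x, energyIntegrand α U (x, t₂) := by
  have hVs := contDiff_of_eq_sub_spatialLap hU hV
  have h1 : (1 : WithTop ℕ∞) ≤ ∞ := by simp
  refine integral_slice_eq_of_dirDeriv_eq_sum ?_ (fun j => ?_) hK
    (support_energyIntegrand_subset α hK.isClosed hsupp)
    (fun j => support_energyFlux_subset α V P j hsupp)
    (dirDeriv_time_energyIntegrand_eq_sum_dirDeriv_energyFlux hU (hP.differentiable (by simp)) hV
      hdiv hmotion) t₁ t₂
  · exact ContDiff.of_le (by unfold energyIntegrand; fun_prop) h1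
  · exact ContDiff.of_le (by unfold energyFlux; fun_prop) h1

section Slices

variable {U : (ι → ℝ) × ℝ → ι → ℝ}

lemma energyIntegrand_eq_fderiv_slice (α : ℝ) (hU : Differentiable ℝ U) (x : ι → ℝ) (t : ℝ) :
    energyIntegrand α U (x, t) = ∑ i, U (x, t) i ^ 2
      + α ^ 2 * ∑ i, ∑ j, fderiv ℝ (fun y => U (y, t) i) x (Pi.single j 1) ^ 2 := by
  simp only [energyIntegrand, fderiv_slice_apply_apply (hU _)]

lemma sum_dirDeriv_eq_zero_of_fderiv_slice (hU : Differentiable ℝ U)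
    (hdiv : ∀ x t, ∑ i, fderiv ℝ (fun y => U (y, t) i) x (Pi.single i 1) = 0)
    (q : (ι → ℝ) × ℝ) : ∑ i, ∂[i] (U · i) q = 0 := by
  simpa only [fderiv_slice_apply_apply (hU _)] using hdiv q.1 q.2

lemma motion_of_fderiv_slice {V : (ι → ℝ) × ℝ → ι → ℝ} {P : (ι → ℝ) × ℝ → ℝ}
    (hU : Differentiable ℝ U) (hV : Differentiable ℝ V) (hP : Differentiable ℝ P)
    (hmotion : ∀ x t i, deriv (fun s => V (x, s) i) t + fderiv ℝ (fun y => V (y, t) i) x (U (x, t))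
      + ∑ j, V (x, t) j * fderiv ℝ (fun y => U (y, t) j) x (Pi.single i 1)
      + fderiv ℝ (fun y => P (y, t)) x (Pi.single i 1) = 0)
    (q : (ι → ℝ) × ℝ) (i : ι) :
    ∂ₜ (V · i) q + dirDeriv (U q, 0) (V · i) q + ∑ j, V q j * ∂[i] (U · j) q + ∂[i] P q = 0 := by
  obtain ⟨x, t⟩ := q
  have htime : deriv (fun s => V (x, s) i) t = ∂ₜ (V · i) (x, t) :=
    (hasDerivAt_slice (F := (V · i)) (by fun_prop)).deriv
  simpa only [htime, fderiv_slice_apply_apply (hV _), fderiv_slice_apply_apply (hU _),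
    fderiv_slice_apply (hP _)] using hmotion x t i

end Slices

lemma lap_slice {n : ℕ} {F : (Fin n → ℝ) × ℝ → ℝ} (hF : ContDiff ℝ ∞ F) (x : Fin n → ℝ) (t : ℝ) :
    lap (fun y => F (y, t)) x = spatialLap F (x, t) := by
  have hF1 : Differentiable ℝ F := hF.differentiable (by simp)
  unfold lap spatialLap
  simp only [fderiv_slice_apply (hF1 _)]
  exact Finset.sum_congr rfl fun j _ => fderiv_slice_apply (by fun_prop) _

end EulerAlpha

theorem euler_alpha_energy_conservation_general
    (α : ℝ)
    (u : (Fin 3 → ℝ) → ℝ → (Fin 3 → ℝ))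
    (p : (Fin 3 → ℝ) → ℝ → ℝ)
    -- smoothness
    (hu : ContDiff ℝ (⊤ : ℕ∞) (fun q : (Fin 3 → ℝ) × ℝ => u q.1 q.2))
    (hp : ContDiff ℝ (⊤ : ℕ∞) (fun q : (Fin 3 → ℝ) × ℝ => p q.1 q.2))
    -- incompressibility : div u = 0
    (hdiv : ∀ x t, ∑ i, fderiv ℝ (fun y => u y t i) x (Pi.single i 1) = 0)
    -- uniform compact support
    (K : Set (Fin 3 → ℝ)) (hK : IsCompact K)
    (hsupp : ∀ t, (Function.support (fun x => u x t) ⊆ K)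
      ∧ (Function.support (fun x => p x t) ⊆ K))
    -- v := u − α²Δu (componentwise Laplacian)
    (v : (Fin 3 → ℝ) → ℝ → (Fin 3 → ℝ))
    (hv : ∀ x t i, v x t i = u x t i - α ^ 2 * lap (fun y => u y t i) x)
    -- Euler-alpha motion equation : ∂ₜv + (u·∇)v + v_j∇u^j + ∇p = 0
    (hmotion : ∀ x t i,
      deriv (fun s => v x s i) t
        + fderiv ℝ (fun y => v y t i) x (u x t)
        + ∑ j, v x t j * fderiv ℝ (fun y => u y t j) x (Pi.single i 1)
        + fderiv ℝ (fun y => p y t) x (Pi.single i 1) = 0) :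
    -- conclusion : E(t) = ½∫(|u|² + α²|∇u|²)dx is constant in time
    ∀ t₁ t₂,
      (1 / 2) * (∫ x, ((∑ i, (u x t₁ i) ^ 2)
          + α ^ 2 * ∑ i, ∑ j, (fderiv ℝ (fun y => u y t₁ i) x (Pi.single j 1)) ^ 2))
      = (1 / 2) * (∫ x, ((∑ i, (u x t₂ i) ^ 2)
          + α ^ 2 * ∑ i, ∑ j, (fderiv ℝ (fun y => u y t₂ i) x (Pi.single j 1)) ^ 2)) := by
  intro t₁ t₂
  set U : (Fin 3 → ℝ) × ℝ → Fin 3 → ℝ := fun q => u q.1 q.2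
  set V : (Fin 3 → ℝ) × ℝ → Fin 3 → ℝ := fun q i => U q i - α ^ 2 * spatialLap (U · i) q
  have hUd : Differentiable ℝ U := hu.differentiable (by simp)
  have hVd : Differentiable ℝ V :=
    (contDiff_of_eq_sub_spatialLap hu (fun _ _ => rfl)).differentiable (by simp)
  obtain rfl : v = fun x t => V (x, t) := by
    funext x t i
    rw [hv]
    exact congrArg (u x t i - α ^ 2 * ·) (lap_slice (F := (U · i)) (by fun_prop) x t)
  have hE := integral_energyIntegrand_eq hu hp (fun _ _ => rfl)
    (sum_dirDeriv_eq_zero_of_fderiv_slice hUd hdiv)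
    (motion_of_fderiv_slice hUd hVd (hp.differentiable (by simp)) hmotion) hK
    (fun q hq => (hsupp q.2).1 hq) t₁ t₂
  simp only [energyIntegrand_eq_fderiv_slice α hUd] at hE
  exact congrArg (1 / 2 * ·) hE

/-- **Conservation of the H¹ energy for the incompressible Euler-alpha
(Lagrangian-averaged Euler) equations.**  With `v = u − α²Δu`, `div u = 0`,
uniform compact support, and the Euler-alpha equation
`∂ₜv + (u·∇)v + v_j∇u^j + ∇p = 0`, the energy
`E(t) = ½∫(|u|² + α²|∇u|²)dx` is constant in time. -/
theorem euler_alpha_energy_conservation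
    (α : ℝ) (hα : 0 < α)
    (u : (Fin 3 → ℝ) → ℝ → (Fin 3 → ℝ))
    (p : (Fin 3 → ℝ) → ℝ → ℝ)
    -- smoothness
    (hu : ContDiff ℝ (⊤ : ℕ∞) (fun q : (Fin 3 → ℝ) × ℝ => u q.1 q.2))
    (hp : ContDiff ℝ (⊤ : ℕ∞) (fun q : (Fin 3 → ℝ) × ℝ => p q.1 q.2))
    -- incompressibility : div u = 0
    (hdiv : ∀ x t, ∑ i, fderiv ℝ (fun y => u y t i) x (Pi.single i 1) = 0)
    -- uniform compact support
    (K : Set (Fin 3 → ℝ)) (hK : IsCompact K)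
    (hsupp : ∀ t, (Function.support (fun x => u x t) ⊆ K)
      ∧ (Function.support (fun x => p x t) ⊆ K))
    -- v := u − α²Δu (componentwise Laplacian)
    (v : (Fin 3 → ℝ) → ℝ → (Fin 3 → ℝ))
    (hv : ∀ x t i, v x t i = u x t i - α ^ 2 * lap (fun y => u y t i) x)
    -- Euler-alpha motion equation : ∂ₜv + (u·∇)v + v_j∇u^j + ∇p = 0
    (hmotion : ∀ x t i,
      deriv (fun s => v x s i) t
        + fderiv ℝ (fun y => v y t i) x (u x t)
        + ∑ j, v x t j * fderiv ℝ (fun y => u y t j) x (Pi.single i 1)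
        + fderiv ℝ (fun y => p y t) x (Pi.single i 1) = 0) :
    -- conclusion : E(t) = ½∫(|u|² + α²|∇u|²)dx is constant in time
    ∀ t₁ t₂,
      (1 / 2) * (∫ x, ((∑ i, (u x t₁ i) ^ 2)
          + α ^ 2 * ∑ i, ∑ j, (fderiv ℝ (fun y => u y t₁ i) x (Pi.single j 1)) ^ 2))
      = (1 / 2) * (∫ x, ((∑ i, (u x t₂ i) ^ 2)
          + α ^ 2 * ∑ i, ∑ j, (fderiv ℝ (fun y => u y t₂ i) x (Pi.single j 1)) ^ 2)) :=
  euler_alpha_energy_conservation_general α u p hu hp hdiv K hK hsupp v hv hmotion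
end
end
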